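/- arXiv:2511.23239 — 6 statements merged into one kernel-verified Lean document; each statement's English description precedes it below -/
import Mathlib

section
/- Fix one sample (X, y) and let ℓ(θ) = −log(e_yᵀ f_θ(X) + ε) with ε > 0. Writing S = S(X̃ᵀWx̃_N) with entries S_i, the gradients of ℓ with respect to V and W are: ∇_V ℓ(θ) = −(e_yᵀ V X S + ε)^{−1} · e_y (Σ_{i=1}^{N−1} S_i x_i)ᵀ, and ∇_W ℓ(θ) = −(e_yᵀ V X S + ε)^{−1} · [[0, A],[0, B]], where the block matrix has column blocks of widths K and M and row blocks of heights K and M, A = (Σ_{i=1}^{N−1} S_i x_i x_iᵀ − (Σ_{i=1}^{N−1} S_i x_i)(Σ_{i=1}^{N−1} S_i x_i)ᵀ)·Vᵀ e_y p_Nᵀ ∈ ℝ^{K×M}, and B = (Σ_{i=1}^{N−1} S_i p_i x_iᵀ − (Σ_{i=1}^{N} S_i p_i)(Σ_{i=1}^{N−1} S_i x_i)ᵀ)·Vᵀ e_y p_Nᵀ ∈ ℝ^{M×M}. -/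
open scoped BigOperators
open Matrix

noncomputable section

namespace RWT

/-- One-step transition probability of the random walk on the circle `ZMod K`:
move clockwise (`+1`) with probability `p`, counterclockwise (`-1`) with probability `1-p`. -/
def stepProb {K : ℕ} (p : ℝ) (a b : ZMod K) : ℝ :=
  (if b = a + 1 then p else 0) + (if b = a - 1 then 1 - p else 0)

/-- Probability mass of a full trajectory `s : Fin N → ZMod K`:
uniform initial state, then Markov steps. -/
def walkPMF (K N : ℕ) (p : ℝ) (s : Fin N → ZMod K) : ℝ :=
  (1 / K) * ∏ i : Fin N,
    if h : (i : ℕ) + 1 < N then stepProb p (s i) (s ⟨(i : ℕ) + 1, h⟩) else 1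

/-- Expectation of `g` over random-walk trajectories. -/
def expect (K N : ℕ) [NeZero K] (p : ℝ) (g : (Fin N → ZMod K) → ℝ) : ℝ :=
  ∑ s : Fin N → ZMod K, walkPMF K N p s * g s

/-- The transition matrix `Π` of the random walk on the circle:
`Π i j = p·1{i = j-1} + (1-p)·1{i = j+1}` (indices mod `K`). -/
def transMat (K : ℕ) (p : ℝ) : Matrix (ZMod K) (ZMod K) ℝ :=
  Matrix.of fun i j => p * (if i = j - 1 then 1 else 0) + (1 - p) * (if i = j + 1 then 1 else 0)

/-- Sinusoidal positional embedding of (1-based) position `i`: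
`(posEmb M i) j = sin((j+1)·i·π/(M+1))`. -/
def posEmb (M : ℕ) (i : ℕ) : Fin M → ℝ :=
  fun j => Real.sin (((j : ℕ) + 1) * i * Real.pi / (M + 1))

/-- The last position index `N` (0-based `N-1`). -/
def lastIdx (N : ℕ) [NeZero N] : Fin N :=
  ⟨N - 1, Nat.sub_lt (Nat.pos_of_ne_zero (NeZero.ne N)) Nat.one_pos⟩

/-- The position index `N-1` (0-based `N-2`) of the direct parent token. -/
def parentIdx (N : ℕ) [NeZero N] : Fin N :=
  ⟨N - 2, by have := Nat.pos_of_ne_zero (NeZero.ne N); omega⟩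

/-- The token matrix `X = [x₁,…,x_{N-1},0]`, where `x_i = e_{s_i}`. -/
def tokenMat (K N : ℕ) (s : Fin N → ZMod K) : Matrix (ZMod K) (Fin N) ℝ :=
  Matrix.of fun k i => if (i : ℕ) < N - 1 ∧ s i = k then 1 else 0

/-- The stacked matrix `X̃` (tokens on top of positional embeddings). -/
def embMat (K N M : ℕ) (s : Fin N → ZMod K) : Matrix (ZMod K ⊕ Fin M) (Fin N) ℝ :=
  Matrix.of fun a i =>
    Sum.elim (fun k => tokenMat K N s k i) (fun j => posEmb M ((i : ℕ) + 1) j) a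

/-- Softmax. -/
def softmax {N : ℕ} (z : Fin N → ℝ) : Fin N → ℝ :=
  fun i => Real.exp (z i) / ∑ j, Real.exp (z j)

/-- Attention scores `X̃ᵀ W x̃_N`. -/
def attnScore (K N M : ℕ) [NeZero K] [NeZero N]
    (W : Matrix (ZMod K ⊕ Fin M) (ZMod K ⊕ Fin M) ℝ) (s : Fin N → ZMod K) : Fin N → ℝ :=
  fun i => ∑ a, embMat K N M s a i * (W.mulVec fun b => embMat K N M s b (lastIdx N)) a

/-- Softmax attention weights `S(X̃ᵀ W x̃_N)`. -/
def attnW (K N M : ℕ) [NeZero K] [NeZero N]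
    (W : Matrix (ZMod K ⊕ Fin M) (ZMod K ⊕ Fin M) ℝ) (s : Fin N → ZMod K) : Fin N → ℝ :=
  softmax (attnScore K N M W s)

/-- The one-layer transformer output `f_θ(X) = V·X·S(X̃ᵀWx̃_N) ∈ ℝ^K`. -/
def tfOut (K N M : ℕ) [NeZero K] [NeZero N] (V : Matrix (ZMod K) (ZMod K) ℝ)
    (W : Matrix (ZMod K ⊕ Fin M) (ZMod K ⊕ Fin M) ℝ) (s : Fin N → ZMod K) : ZMod K → ℝ :=
  V.mulVec ((tokenMat K N s).mulVec (attnW K N M W s))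

/-- Population loss `L(θ) = E[ℓ(e_yᵀ f_θ(X))]`. -/
def popLoss (K N M : ℕ) [NeZero K] [NeZero N] (p : ℝ) (ℓ : ℝ → ℝ)
    (V : Matrix (ZMod K) (ZMod K) ℝ)
    (W : Matrix (ZMod K ⊕ Fin M) (ZMod K ⊕ Fin M) ℝ) : ℝ :=
  expect K N p fun s => ℓ (tfOut K N M V W s (s (lastIdx N)))

/-- Entrywise matrix gradient (matrix of partial derivatives). -/
def mgrad {α β : Type*} [DecidableEq α] [DecidableEq β]
    (f : Matrix α β ℝ → ℝ) (A : Matrix α β ℝ) : Matrix α β ℝ :=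
  Matrix.of fun i j => deriv (fun t : ℝ => f (A + t • Matrix.single i j 1)) 0

/-- Gradient descent on the population loss from zero initialization with learning rate `η`. -/
def gd (K N M : ℕ) [NeZero K] [NeZero N] (p η : ℝ) (ℓ : ℝ → ℝ) :
    ℕ → Matrix (ZMod K) (ZMod K) ℝ × Matrix (ZMod K ⊕ Fin M) (ZMod K ⊕ Fin M) ℝ
  | 0 => (0, 0)
  | t + 1 =>
      let θ := gd K N M p η ℓ t
      (θ.1 - η • mgrad (fun V => popLoss K N M p ℓ V θ.2) θ.1,
       θ.2 - η • mgrad (fun W => popLoss K N M p ℓ θ.1 W) θ.2)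

/-- The (regularized) log loss `z ↦ -log(z + ε)`. -/
def logLoss (ε : ℝ) : ℝ → ℝ := fun z => - Real.log (z + ε)

/-- The predicted label: the smallest maximizer of `v`. -/
def pred {K : ℕ} [NeZero K] (v : ZMod K → ℝ) : ZMod K :=
  letI := Classical.decPred fun j : ZMod K => ∀ i, v i ≤ v j
  letI : LinearOrder (ZMod K) := LinearOrder.lift' ZMod.val (ZMod.val_injective K)
  (Finset.univ.filter fun j : ZMod K => ∀ i, v i ≤ v j).min' (by
    classical
    obtain ⟨b, _, hb⟩ := Finset.exists_max_image Finset.univ v ⟨0, Finset.mem_univ 0⟩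
    exact ⟨b, Finset.mem_filter.2 ⟨Finset.mem_univ b, fun i => hb i (Finset.mem_univ i)⟩⟩)

/-- Prediction accuracy `P[Pred(f_θ(X)) = y]` of parameters `(V, W)`. -/
def accuracy (K N M : ℕ) [NeZero K] [NeZero N] (p : ℝ)
    (V : Matrix (ZMod K) (ZMod K) ℝ)
    (W : Matrix (ZMod K ⊕ Fin M) (ZMod K ⊕ Fin M) ℝ) : ℝ :=
  expect K N p fun s => if pred (tfOut K N M V W s) = s (lastIdx N) then 1 else 0

/-- Max (entrywise sup) norm of a matrix. -/
def maxNorm {α β : Type*} (A : Matrix α β ℝ) : ℝ := ⨆ i, ⨆ j, |A i j|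

/-- Frobenius norm of a matrix. -/
def frobNorm {α β : Type*} [Fintype α] [Fintype β] (A : Matrix α β ℝ) : ℝ :=
  Real.sqrt (∑ i, ∑ j, (A i j) ^ 2)

/-- Euclidean norm of a vector. -/
def l2norm {α : Type*} [Fintype α] (v : α → ℝ) : ℝ := Real.sqrt (∑ i, (v i) ^ 2)

/-- `Tstar` is bounded by a polynomial in `(η, ε⁻¹, K, N, M)`. -/
def polyBound (η ε : ℝ) (K N M Tstar : ℕ) : Prop :=
  ∃ d : ℕ, (Tstar : ℝ) ≤ (η + ε⁻¹ + K + N + M) ^ d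

/-- The all-ones `K × K` matrix. -/
def onesMat (K : ℕ) : Matrix (ZMod K) (ZMod K) ℝ := Matrix.of fun _ _ => 1

end RWT
namespace RWT

/-- Weighted average token `Σ_{i=1}^{N-1} S_i x_i` (the last token is zero). -/
def wAvgTok (K N M : ℕ) [NeZero K] [NeZero N]
    (W : Matrix (ZMod K ⊕ Fin M) (ZMod K ⊕ Fin M) ℝ) (s : Fin N → ZMod K) : ZMod K → ℝ :=
  (tokenMat K N s).mulVec (attnW K N M W s)

/-- Weighted average positional embedding `Σ_{i=1}^{N} S_i p_i`. -/
def wAvgPos (K N M : ℕ) [NeZero K] [NeZero N]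
    (W : Matrix (ZMod K ⊕ Fin M) (ZMod K ⊕ Fin M) ℝ) (s : Fin N → ZMod K) : Fin M → ℝ :=
  fun j => ∑ i : Fin N, attnW K N M W s i * posEmb M ((i : ℕ) + 1) j

/-- The block `A = (Σ S_i x_i x_iᵀ − (Σ S_i x_i)(Σ S_i x_i)ᵀ)·Vᵀe_y·p_Nᵀ ∈ ℝ^{K×M}`. -/
def matA (K N M : ℕ) [NeZero K] [NeZero N]
    (V : Matrix (ZMod K) (ZMod K) ℝ) (W : Matrix (ZMod K ⊕ Fin M) (ZMod K ⊕ Fin M) ℝ)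
    (s : Fin N → ZMod K) : Matrix (ZMod K) (Fin M) ℝ :=
  Matrix.vecMulVec
    ((((∑ i : Fin N, attnW K N M W s i •
          Matrix.vecMulVec (fun k => tokenMat K N s k i) (fun k => tokenMat K N s k i))
        - Matrix.vecMulVec (wAvgTok K N M W s) (wAvgTok K N M W s))).mulVec
      (Vᵀ.mulVec (Pi.single (s (lastIdx N)) 1)))
    (posEmb M N)

/-- The block `B = (Σ_{i≤N-1} S_i p_i x_iᵀ − (Σ_{i≤N} S_i p_i)(Σ_{i≤N-1} S_i x_i)ᵀ)·Vᵀe_y·p_Nᵀ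
∈ ℝ^{M×M}`. -/
def matB (K N M : ℕ) [NeZero K] [NeZero N]
    (V : Matrix (ZMod K) (ZMod K) ℝ) (W : Matrix (ZMod K ⊕ Fin M) (ZMod K ⊕ Fin M) ℝ)
    (s : Fin N → ZMod K) : Matrix (Fin M) (Fin M) ℝ :=
  Matrix.vecMulVec
    ((((∑ i : Fin N, attnW K N M W s i •
          Matrix.vecMulVec (posEmb M ((i : ℕ) + 1)) (fun k => tokenMat K N s k i))
        - Matrix.vecMulVec (wAvgPos K N M W s) (wAvgTok K N M W s))).mulVec
      (Vᵀ.mulVec (Pi.single (s (lastIdx N)) 1)))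
    (posEmb M N)

end RWT

namespace RWT

open Filter Topology

variable {K N M : ℕ} [NeZero K] [NeZero N]

lemma derivAux_log_comp_zero {u : ℝ → ℝ} (hu : ContinuousAt u 0) (h0 : u 0 = 0) :
    deriv (fun t => Real.log (u t)) 0 = 0 := by
  by_cases hev : ∀ᶠ t in 𝓝 (0:ℝ), u t = 0
  · have : (fun t => Real.log (u t)) =ᶠ[𝓝 (0:ℝ)] fun _ => 0 := by
      filter_upwards [hev] with t ht; simp [ht]
    rw [this.deriv_eq]; simp
  · apply deriv_zero_of_not_differentiableAt
    intro hdiff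
    have hcont : ContinuousAt (fun t => Real.log (u t)) 0 := hdiff.continuousAt
    have hfreq : ∃ᶠ t in 𝓝 (0:ℝ), u t ≠ 0 := Filter.not_eventually.mp hev
    have hne : (𝓝[{t : ℝ | u t ≠ 0}] (0:ℝ)).NeBot := frequently_iff_neBot.mp hfreq
    have h1 : Tendsto u (𝓝[{t : ℝ | u t ≠ 0}] (0:ℝ)) (𝓝[≠] (0:ℝ)) := by
      rw [tendsto_nhdsWithin_iff]
      constructor
      · have := hu.tendsto
        rw [h0] at this
        exact this.mono_left nhdsWithin_le_nhds
      · exact eventually_mem_nhdsWithin.mono fun t ht => ht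
    have h2 : Tendsto (fun t => Real.log (u t)) (𝓝[{t : ℝ | u t ≠ 0}] (0:ℝ)) atBot :=
      Real.tendsto_log_nhdsNE_zero.comp h1
    have h3 : Tendsto (fun t => Real.log (u t)) (𝓝[{t : ℝ | u t ≠ 0}] (0:ℝ)) (𝓝 0) := by
      have := hcont.tendsto
      rw [h0, Real.log_zero] at this
      exact this.mono_left nhdsWithin_le_nhds
    exact not_tendsto_atBot_of_tendsto_nhds h3 h2

lemma softmaxDen_pos (z : Fin N → ℝ) : 0 < ∑ j, Real.exp (z j) :=
  Finset.sum_pos (fun j _ => Real.exp_pos _) Finset.univ_nonempty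

lemma hasDerivAt_softmaxSum (z c q : Fin N → ℝ) :
    HasDerivAt (fun t : ℝ => ∑ n, q n * softmax (fun m => z m + t * c m) n)
      ((∑ n, q n * c n * softmax z n)
        - (∑ n, q n * softmax z n) * (∑ n, c n * softmax z n)) 0 := by
  set D : ℝ → ℝ := fun t => ∑ m, Real.exp (z m + t * c m) with hD
  set Nu : ℝ → ℝ := fun t => ∑ m, q m * Real.exp (z m + t * c m) with hNu
  have hDpos : ∀ t, 0 < D t := fun t => softmaxDen_pos _
  have hDd : HasDerivAt D (∑ m, c m * Real.exp (z m)) 0 := by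
    have : ∀ m : Fin N, HasDerivAt (fun t : ℝ => Real.exp (z m + t * c m))
        (c m * Real.exp (z m)) 0 := by
      intro m
      have h1 : HasDerivAt (fun t : ℝ => z m + t * c m) (c m) 0 := by
        simpa using ((hasDerivAt_id (0:ℝ)).mul_const (c m)).const_add (z m)
      simpa [mul_comm] using h1.exp
    simpa using HasDerivAt.fun_sum (fun m _ => this m)
  have hNd : HasDerivAt Nu (∑ m, q m * c m * Real.exp (z m)) 0 := by
    have : ∀ m : Fin N, HasDerivAt (fun t : ℝ => q m * Real.exp (z m + t * c m))
        (q m * c m * Real.exp (z m)) 0 := by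
      intro m
      have h1 : HasDerivAt (fun t : ℝ => z m + t * c m) (c m) 0 := by
        simpa using ((hasDerivAt_id (0:ℝ)).mul_const (c m)).const_add (z m)
      have := (h1.exp).const_mul (q m)
      simpa [mul_comm, mul_assoc, mul_left_comm] using this
    simpa using HasDerivAt.fun_sum (fun m _ => this m)
  have key : HasDerivAt (fun t => Nu t / D t)
      (((∑ m, q m * c m * Real.exp (z m)) * D 0 - Nu 0 * (∑ m, c m * Real.exp (z m))) / (D 0)^2)
      0 := hNd.div hDd (hDpos 0).ne'
  have heq : (fun t : ℝ => ∑ n, q n * softmax (fun m => z m + t * c m) n)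
      = fun t => Nu t / D t := by
    funext t
    simp only [softmax, hNu, hD, Finset.sum_div]
    exact Finset.sum_congr rfl fun n _ => by ring
  rw [heq]
  convert key using 1
  have hD0 : D 0 = ∑ m, Real.exp (z m) := by simp [hD]
  have hN0 : Nu 0 = ∑ m, q m * Real.exp (z m) := by simp [hNu]
  rw [hD0, hN0]
  have hne : (∑ m, Real.exp (z m)) ≠ 0 := by
    rw [← hD0]; exact (hDpos 0).ne'
  simp only [softmax, ← mul_div_assoc, ← Finset.sum_div]
  field_simp

lemma tokenMat_lastIdx (s : Fin N → ZMod K) (k : ZMod K) :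
    tokenMat K N s k (lastIdx N) = 0 := by
  simp [tokenMat, lastIdx]

lemma lastIdx_val_add_one : ((lastIdx N : Fin N) : ℕ) + 1 = N := by
  have := Nat.pos_of_ne_zero (NeZero.ne N)
  simp only [lastIdx]
  omega

lemma tfOut_sum (V : Matrix (ZMod K) (ZMod K) ℝ)
    (W : Matrix (ZMod K ⊕ Fin M) (ZMod K ⊕ Fin M) ℝ) (s : Fin N → ZMod K) (y : ZMod K) :
    tfOut K N M V W s y
      = ∑ n, (∑ k, V y k * tokenMat K N s k n) * attnW K N M W s n := by
  simp only [tfOut, Matrix.mulVec, dotProduct, Finset.mul_sum, Finset.sum_mul]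
  rw [Finset.sum_comm]
  exact Finset.sum_congr rfl fun n _ => Finset.sum_congr rfl fun k _ => by ring

lemma mulVec_transpose_single (V : Matrix (ZMod K) (ZMod K) ℝ) (y l : ZMod K) :
    Vᵀ.mulVec (Pi.single y 1) l = V y l := by
  simp [Matrix.mulVec, dotProduct, Pi.single_apply, Matrix.transpose_apply]

lemma attnScore_shift (W : Matrix (ZMod K ⊕ Fin M) (ZMod K ⊕ Fin M) ℝ)
    (s : Fin N → ZMod K) (α β : ZMod K ⊕ Fin M) (t : ℝ) (n : Fin N) :
    attnScore K N M (W + t • Matrix.single α β 1) s n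
      = attnScore K N M W s n
        + t * (embMat K N M s α n * embMat K N M s β (lastIdx N)) := by
  simp only [attnScore, Matrix.mulVec, dotProduct, Matrix.add_apply, Matrix.smul_apply,
    Matrix.single, Matrix.of_apply, smul_eq_mul, mul_ite, mul_one, mul_zero,
    add_mul, mul_add, Finset.sum_add_distrib]
  congr 1
  simp only [ite_and, ite_mul, zero_mul, mul_ite, mul_zero, Finset.sum_ite_eq,
    Finset.sum_ite_irrel, Finset.sum_const_zero, Finset.mem_univ, if_true]
  ring

end RWT

namespace RWT
variable {K N M : ℕ} [NeZero K] [NeZero N]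

lemma matA_apply (V : Matrix (ZMod K) (ZMod K) ℝ)
    (W : Matrix (ZMod K ⊕ Fin M) (ZMod K ⊕ Fin M) ℝ) (s : Fin N → ZMod K)
    (k : ZMod K) (j' : Fin M) :
    matA K N M V W s k j'
      = ((∑ n : Fin N, (∑ l : ZMod K, V (s (lastIdx N)) l * tokenMat K N s l n)
            * tokenMat K N s k n * attnW K N M W s n)
          - (∑ n : Fin N, (∑ l : ZMod K, V (s (lastIdx N)) l * tokenMat K N s l n)
              * attnW K N M W s n)
            * (∑ n : Fin N, tokenMat K N s k n * attnW K N M W s n)) * posEmb M N j' := by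
  simp only [matA, Matrix.vecMulVec_apply, Matrix.mulVec, dotProduct, Matrix.sub_apply,
    Matrix.sum_apply, Matrix.smul_apply, smul_eq_mul, Matrix.transpose_apply, Pi.single_apply,
    mul_ite, mul_one, mul_zero, ite_mul, zero_mul, Finset.sum_ite_eq, Finset.sum_ite_eq',
    Finset.mem_univ, if_true, wAvgTok, sub_mul, Finset.sum_sub_distrib]
  congr 1
  · congr 1
    simp only [Finset.sum_mul]
    rw [Finset.sum_comm]
    exact Finset.sum_congr rfl fun n _ => Finset.sum_congr rfl fun x _ => by ring
  · congr 1
    have h2 : ∑ x : ZMod K, (∑ n : Fin N, tokenMat K N s x n * attnW K N M W s n)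
          * V (s (lastIdx N)) x
        = ∑ n : Fin N, (∑ l : ZMod K, V (s (lastIdx N)) l * tokenMat K N s l n)
            * attnW K N M W s n := by
      simp only [Finset.sum_mul]
      rw [Finset.sum_comm]
      exact Finset.sum_congr rfl fun n _ => Finset.sum_congr rfl fun x _ => by ring
    rw [mul_comm, ← h2, Finset.mul_sum]
    exact Finset.sum_congr rfl fun x _ => by ring

lemma matB_apply (V : Matrix (ZMod K) (ZMod K) ℝ)
    (W : Matrix (ZMod K ⊕ Fin M) (ZMod K ⊕ Fin M) ℝ) (s : Fin N → ZMod K)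
    (jm : Fin M) (j' : Fin M) :
    matB K N M V W s jm j'
      = ((∑ n : Fin N, (∑ l : ZMod K, V (s (lastIdx N)) l * tokenMat K N s l n)
            * posEmb M ((n : ℕ) + 1) jm * attnW K N M W s n)
          - (∑ n : Fin N, (∑ l : ZMod K, V (s (lastIdx N)) l * tokenMat K N s l n)
              * attnW K N M W s n)
            * (∑ n : Fin N, posEmb M ((n : ℕ) + 1) jm * attnW K N M W s n)) * posEmb M N j' := by
  simp only [matB, Matrix.vecMulVec_apply, Matrix.mulVec, dotProduct, Matrix.sub_apply,
    Matrix.sum_apply, Matrix.smul_apply, smul_eq_mul, Matrix.transpose_apply, Pi.single_apply,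
    mul_ite, mul_one, mul_zero, ite_mul, zero_mul, Finset.sum_ite_eq, Finset.sum_ite_eq',
    Finset.mem_univ, if_true, wAvgTok, wAvgPos, sub_mul, Finset.sum_sub_distrib]
  congr 1
  · congr 1
    simp only [Finset.sum_mul]
    rw [Finset.sum_comm]
    exact Finset.sum_congr rfl fun n _ => Finset.sum_congr rfl fun x _ => by ring
  · congr 1
    have h2 : ∑ x : ZMod K, (∑ n : Fin N, tokenMat K N s x n * attnW K N M W s n)
          * V (s (lastIdx N)) x
        = ∑ n : Fin N, (∑ l : ZMod K, V (s (lastIdx N)) l * tokenMat K N s l n)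
            * attnW K N M W s n := by
      simp only [Finset.sum_mul]
      rw [Finset.sum_comm]
      exact Finset.sum_congr rfl fun n _ => Finset.sum_congr rfl fun x _ => by ring
    rw [mul_comm, ← h2, Finset.mul_sum]
    refine Finset.sum_congr rfl fun x _ => ?_
    rw [show (∑ x : Fin N, posEmb M ((x:ℕ) + 1) jm * attnW K N M W s x)
        = ∑ x : Fin N, attnW K N M W s x * posEmb M ((x:ℕ) + 1) jm from
      Finset.sum_congr rfl fun x _ => mul_comm _ _]
    ring

end RWT

/-- Lemma B.1: gradients of the per-sample log loss
`ℓ(θ) = −log(e_yᵀ f_θ(X) + ε)` with respect to `V` and `W`. -/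
theorem statement2 (K N M : ℕ) [NeZero K] [NeZero N] (hN : 2 ≤ N)
    (ε : ℝ) (hε : 0 < ε)
    (V : Matrix (ZMod K) (ZMod K) ℝ) (W : Matrix (ZMod K ⊕ Fin M) (ZMod K ⊕ Fin M) ℝ)
    (s : Fin N → ZMod K) :
    RWT.mgrad (fun V' => RWT.logLoss ε (RWT.tfOut K N M V' W s (s (RWT.lastIdx N)))) V
        = (-(RWT.tfOut K N M V W s (s (RWT.lastIdx N)) + ε)⁻¹) •
            Matrix.vecMulVec (Pi.single (s (RWT.lastIdx N)) 1) (RWT.wAvgTok K N M W s)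
    ∧ RWT.mgrad (fun W' => RWT.logLoss ε (RWT.tfOut K N M V W' s (s (RWT.lastIdx N)))) W
        = (-(RWT.tfOut K N M V W s (s (RWT.lastIdx N)) + ε)⁻¹) •
            Matrix.fromBlocks (0 : Matrix (ZMod K) (ZMod K) ℝ) (RWT.matA K N M V W s)
              (0 : Matrix (Fin M) (ZMod K) ℝ) (RWT.matB K N M V W s) := by
  classical
  set y := s (RWT.lastIdx N) with hy
  set g0 := RWT.tfOut K N M V W s y with hg0
  constructor
  · ext i j
    set cV : ℝ := (Pi.single y 1 : ZMod K → ℝ) i * RWT.wAvgTok K N M W s j with hcV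
    have haff : ∀ t : ℝ,
        RWT.tfOut K N M (V + t • Matrix.single i j 1) W s y = g0 + t * cV := by
      intro t
      rw [RWT.tfOut_sum, hg0, RWT.tfOut_sum]
      simp only [Matrix.add_apply, Matrix.smul_apply, Matrix.single, Matrix.of_apply,
        smul_eq_mul, add_mul, Finset.sum_add_distrib, mul_ite, mul_one, mul_zero, ite_and,
        ite_mul, zero_mul, Finset.sum_ite_irrel, Finset.sum_ite_eq, Finset.sum_const_zero,
        Finset.mem_univ, if_true, hcV, Pi.single_apply, RWT.wAvgTok, Matrix.mulVec, dotProduct]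
      congr 1
      split_ifs with hiy
      · simp [Finset.mul_sum, mul_assoc]
      · rfl
    have hfun : (fun t : ℝ => RWT.logLoss ε
          (RWT.tfOut K N M (V + t • Matrix.single i j 1) W s y))
        = fun t => -Real.log (g0 + t * cV + ε) := funext fun t => by
      simp only [RWT.logLoss, haff]
    have hentry : RWT.mgrad (fun V' => RWT.logLoss ε (RWT.tfOut K N M V' W s y)) V i j
        = deriv (fun t : ℝ => RWT.logLoss ε
            (RWT.tfOut K N M (V + t • Matrix.single i j 1) W s y)) 0 := rfl
    rw [hentry, hfun]
    have hd : HasDerivAt (fun t : ℝ => g0 + t * cV + ε) cV 0 := by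
      simpa using (((hasDerivAt_id (0:ℝ)).mul_const cV).const_add g0).add_const ε
    by_cases hg : g0 + ε = 0
    · have h1 : deriv (fun t : ℝ => -Real.log (g0 + t * cV + ε)) 0 = 0 := by
        have := RWT.derivAux_log_comp_zero (u := fun t : ℝ => g0 + t * cV + ε)
          hd.continuousAt (by simpa using hg)
        rw [deriv.fun_neg, this, neg_zero]
      rw [h1]
      simp [Matrix.smul_apply, Matrix.vecMulVec_apply, hg]
    · have hlog : HasDerivAt (fun t : ℝ => Real.log (g0 + t * cV + ε)) ((g0 + ε)⁻¹ * cV) 0 := by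
        have h2 : HasDerivAt Real.log (g0 + ε)⁻¹ (g0 + 0 * cV + ε) := by
          simpa using Real.hasDerivAt_log hg
        simpa [Function.comp_def] using h2.comp 0 hd
      rw [(hlog.fun_neg).deriv]
      simp only [Matrix.smul_apply, Matrix.vecMulVec_apply, smul_eq_mul, hcV]
      ring
  · ext α β
    set z : Fin N → ℝ := RWT.attnScore K N M W s with hz
    set c : Fin N → ℝ := fun n =>
      RWT.embMat K N M s α n * RWT.embMat K N M s β (RWT.lastIdx N) with hc
    set q : Fin N → ℝ := fun n => ∑ k, V y k * RWT.tokenMat K N s k n with hq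
    have hfun : (fun t : ℝ => RWT.logLoss ε
          (RWT.tfOut K N M V (W + t • Matrix.single α β 1) s y))
        = fun t => -Real.log ((∑ n, q n * RWT.softmax (fun m => z m + t * c m) n) + ε) := by
      funext t
      have hsum : RWT.tfOut K N M V (W + t • Matrix.single α β 1) s y
          = ∑ n, q n * RWT.softmax (fun m => z m + t * c m) n := by
        rw [RWT.tfOut_sum]
        refine Finset.sum_congr rfl fun n _ => ?_
        have hw : RWT.attnW K N M (W + t • Matrix.single α β 1) s n
            = RWT.softmax (fun m => z m + t * c m) n := by
          show RWT.softmax (RWT.attnScore K N M (W + t • Matrix.single α β 1) s) n = _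
          congr 1
          funext m
          rw [RWT.attnScore_shift]
        rw [hw]
      simp only [RWT.logLoss, hsum]
    have hS : ∀ n, RWT.softmax z n = RWT.attnW K N M W s n := fun n => rfl
    have hg0' : (∑ n, q n * RWT.softmax z n) = g0 := by
      rw [hg0, RWT.tfOut_sum]
      rfl
    set d : ℝ := (∑ n, q n * c n * RWT.softmax z n)
        - (∑ n, q n * RWT.softmax z n) * (∑ n, c n * RWT.softmax z n) with hdd
    have hderiv : HasDerivAt
        (fun t : ℝ => (∑ n, q n * RWT.softmax (fun m => z m + t * c m) n) + ε) d 0 :=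
      (RWT.hasDerivAt_softmaxSum z c q).add_const ε
    have hval : (∑ n, q n * RWT.softmax (fun m => z m + (0:ℝ) * c m) n) + ε = g0 + ε := by
      rw [← hg0']
      congr 1
      refine Finset.sum_congr rfl fun n _ => ?_
      congr 2
      funext m; ring
    have hentry : RWT.mgrad (fun W' => RWT.logLoss ε (RWT.tfOut K N M V W' s y)) W α β
        = deriv (fun t : ℝ => RWT.logLoss ε
            (RWT.tfOut K N M V (W + t • Matrix.single α β 1) s y)) 0 := rfl
    rw [hentry, hfun]
    have hblock : d = Matrix.fromBlocks (0 : Matrix (ZMod K) (ZMod K) ℝ)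
        (RWT.matA K N M V W s) (0 : Matrix (Fin M) (ZMod K) ℝ) (RWT.matB K N M V W s) α β := by
      rcases β with k' | j'
      · have hc0 : ∀ n, c n = 0 := fun n => by
          rw [hc]
          show RWT.embMat K N M s α n * RWT.tokenMat K N s k' (RWT.lastIdx N) = 0
          rw [RWT.tokenMat_lastIdx, mul_zero]
        rcases α with k | jm <;> simp [hdd, hc0, Matrix.fromBlocks]
      · have hcc : ∀ n, c n = RWT.embMat K N M s α n * RWT.posEmb M N j' := fun n => by
          rw [hc]
          show RWT.embMat K N M s α n
              * RWT.posEmb M (((RWT.lastIdx N : Fin N) : ℕ) + 1) j' = _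
          rw [RWT.lastIdx_val_add_one]
        have ha3 : (∑ n, q n * RWT.softmax z n)
            = ∑ n : Fin N, (∑ l : ZMod K, V y l * RWT.tokenMat K N s l n)
                * RWT.attnW K N M W s n := by
          refine Finset.sum_congr rfl fun n _ => ?_
          rw [hS n]
        rcases α with k | jm
        · have ha1 : (∑ n, q n * c n * RWT.softmax z n)
              = (∑ n : Fin N, (∑ l : ZMod K, V y l * RWT.tokenMat K N s l n)
                  * RWT.tokenMat K N s k n * RWT.attnW K N M W s n) * RWT.posEmb M N j' := by
            rw [Finset.sum_mul]
            refine Finset.sum_congr rfl fun n _ => ?_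
            rw [hcc n, hS n]
            simp only [hq]
            rw [show RWT.embMat K N M s (Sum.inl k) n = RWT.tokenMat K N s k n from rfl]
            ring
          have ha2 : (∑ n, c n * RWT.softmax z n)
              = (∑ n : Fin N, RWT.tokenMat K N s k n * RWT.attnW K N M W s n)
                  * RWT.posEmb M N j' := by
            rw [Finset.sum_mul]
            refine Finset.sum_congr rfl fun n _ => ?_
            rw [hcc n, hS n]
            rw [show RWT.embMat K N M s (Sum.inl k) n = RWT.tokenMat K N s k n from rfl]
            ring
          rw [hdd, Matrix.fromBlocks_apply₁₂, RWT.matA_apply, ← hy, ha1, ha2, ha3]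
          ring
        · have ha1 : (∑ n, q n * c n * RWT.softmax z n)
              = (∑ n : Fin N, (∑ l : ZMod K, V y l * RWT.tokenMat K N s l n)
                  * RWT.posEmb M ((n : ℕ) + 1) jm * RWT.attnW K N M W s n)
                  * RWT.posEmb M N j' := by
            rw [Finset.sum_mul]
            refine Finset.sum_congr rfl fun n _ => ?_
            rw [hcc n, hS n]
            simp only [hq]
            rw [show RWT.embMat K N M s (Sum.inr jm) n
                = RWT.posEmb M ((n : ℕ) + 1) jm from rfl]
            ring
          have ha2 : (∑ n, c n * RWT.softmax z n)
              = (∑ n : Fin N, RWT.posEmb M ((n : ℕ) + 1) jm * RWT.attnW K N M W s n)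
                  * RWT.posEmb M N j' := by
            rw [Finset.sum_mul]
            refine Finset.sum_congr rfl fun n _ => ?_
            rw [hcc n, hS n]
            rw [show RWT.embMat K N M s (Sum.inr jm) n
                = RWT.posEmb M ((n : ℕ) + 1) jm from rfl]
            ring
          rw [hdd, Matrix.fromBlocks_apply₂₂, RWT.matB_apply, ← hy, ha1, ha2, ha3]
          ring
    by_cases hg : g0 + ε = 0
    · have h1 : deriv (fun t : ℝ =>
          -Real.log ((∑ n, q n * RWT.softmax (fun m => z m + t * c m) n) + ε)) 0 = 0 := by
        have := RWT.derivAux_log_comp_zero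
          (u := fun t : ℝ => (∑ n, q n * RWT.softmax (fun m => z m + t * c m) n) + ε)
          hderiv.continuousAt (by
            show (∑ n, q n * RWT.softmax (fun m => z m + (0:ℝ) * c m) n) + ε = 0
            rw [hval, hg])
        rw [deriv.fun_neg, this, neg_zero]
      rw [h1]
      simp [Matrix.smul_apply, hg]
    · have hu0 : ((fun t : ℝ => (∑ n, q n * RWT.softmax (fun m => z m + t * c m) n) + ε) 0)
          = g0 + ε := hval
      have hlog : HasDerivAt (fun t : ℝ =>
          Real.log ((∑ n, q n * RWT.softmax (fun m => z m + t * c m) n) + ε))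
          ((g0 + ε)⁻¹ * d) 0 := by
        have h2 := Real.hasDerivAt_log hg
        rw [← hu0] at h2
        have h4 := h2.comp 0 hderiv
        rw [hu0] at h4
        simpa [Function.comp_def] using h4
      rw [(hlog.fun_neg).deriv]
      simp only [Matrix.smul_apply, smul_eq_mul]
      rw [← hblock]
      ring
end
end

section
/- Under the conditions of Theorem 3.1 (in particular 0 < p < 1 and zero initialization), after one gradient descent step on the population loss, V^(1) = (η/(εNK))·Σ_{i=1}^{N−1} (Πᵀ)^{N−i} and W^(1) = 0. -/
open scoped BigOperators
open Matrix

noncomputable section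

namespace RWTProof
open RWT

set_option linter.unusedSectionVars false
set_option linter.unnecessarySimpa false

variable {K : ℕ} [NeZero K] {p : ℝ}

lemma stepMat_eq (a b : ZMod K) : transMat K p a b = stepProb p a b := by
  unfold transMat stepProb
  have h1 : (a = b - 1) = (b = a + 1) :=
    propext ⟨fun h => by subst h; ring, fun h => by subst h; ring⟩
  have h2 : (a = b + 1) = (b = a - 1) :=
    propext ⟨fun h => by subst h; ring, fun h => by subst h; ring⟩
  simp only [Matrix.of_apply, h1, h2, mul_ite, mul_one, mul_zero]

lemma colsum (b : ZMod K) : ∑ a : ZMod K, stepProb p a b = 1 := by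
  unfold stepProb
  rw [Finset.sum_add_distrib]
  have h1 : ∀ a : ZMod K, (b = a + 1) = (a = b - 1) := fun a =>
    propext ⟨fun h => by subst h; ring, fun h => by subst h; ring⟩
  have h2 : ∀ a : ZMod K, (b = a - 1) = (a = b + 1) := fun a =>
    propext ⟨fun h => by subst h; ring, fun h => by subst h; ring⟩
  simp only [h1, h2, Finset.sum_ite_eq', Finset.mem_univ, if_true]
  ring

lemma prodSplit (n : ℕ) (s : Fin (n+1) → ZMod K) :
    walkPMF K (n+1) p s
      = (1 / K) * ∏ i : Fin n, stepProb p (s i.castSucc) (s i.succ) := by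
  unfold walkPMF
  congr 1
  rw [Fin.prod_univ_castSucc]
  have hlast : (if h : ((Fin.last n : Fin (n+1)) : ℕ) + 1 < n + 1 then
      stepProb p (s (Fin.last n)) (s ⟨((Fin.last n : Fin (n+1)) : ℕ) + 1, h⟩) else 1) = 1 := by
    rw [dif_neg]; simp [Fin.last]
  rw [hlast, mul_one]
  refine Finset.prod_congr rfl fun i _ => ?_
  have hi : ((i.castSucc : Fin (n+1)) : ℕ) + 1 < n + 1 := by
    simpa using i.isLt
  rw [dif_pos hi]
  congr 1

lemma chain (n : ℕ) (g : ZMod K → ZMod K → ℝ) :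
    ∑ s : Fin (n+1) → ZMod K,
      (∏ i : Fin n, stepProb p (s i.castSucc) (s i.succ)) * g (s 0) (s (Fin.last n))
    = ∑ x, ∑ y, ((transMat K p) ^ n) x y * g x y := by
  induction n generalizing g with
  | zero =>
      rw [← Equiv.sum_comp (Equiv.funUnique (Fin 1) (ZMod K)).symm]
      simp [Matrix.one_apply, Fin.last]
  | succ n ih =>
      rw [← Equiv.sum_comp (Fin.consEquiv (fun _ : Fin (n+2) => ZMod K)), Fintype.sum_prod_type]
      simp only [Fin.consEquiv_apply]
      have hterm : ∀ (a : ZMod K) (s' : Fin (n+1) → ZMod K),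
          (∏ i : Fin (n+1), stepProb p ((Fin.cons a s' : Fin (n+2) → ZMod K) i.castSucc)
              ((Fin.cons a s' : Fin (n+2) → ZMod K) i.succ))
            * g ((Fin.cons a s' : Fin (n+2) → ZMod K) 0)
              ((Fin.cons a s' : Fin (n+2) → ZMod K) (Fin.last (n+1)))
          = (∏ i : Fin n, stepProb p (s' i.castSucc) (s' i.succ))
              * (stepProb p a (s' 0) * g a (s' (Fin.last n))) := by
        intro a s'
        rw [Fin.prod_univ_succ]
        have h0 : ((0 : Fin (n+1)).castSucc) = (0 : Fin (n+2)) := rfl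
        have hs0 : (Fin.cons a s' : Fin (n+2) → ZMod K) ((0 : Fin (n+1)).succ) = s' 0 :=
          Fin.cons_succ _ _ _
        have hlast : (Fin.cons a s' : Fin (n+2) → ZMod K) (Fin.last (n+1)) = s' (Fin.last n) := by
          rw [← Fin.succ_last]; exact Fin.cons_succ _ _ _
        have hprod : ∀ i : Fin n,
            stepProb p ((Fin.cons a s' : Fin (n+2) → ZMod K) (i.succ.castSucc))
              ((Fin.cons a s' : Fin (n+2) → ZMod K) (i.succ.succ))
            = stepProb p (s' i.castSucc) (s' i.succ) := by
          intro i
          rw [← Fin.succ_castSucc, Fin.cons_succ, Fin.cons_succ]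
        rw [Finset.prod_congr rfl (fun i _ => hprod i), h0, Fin.cons_zero, hs0, hlast]
        ring
      rw [Finset.sum_congr rfl fun a _ => Finset.sum_congr rfl fun s' _ => hterm a s']
      have step2 : ∀ a : ZMod K,
          ∑ s' : Fin (n+1) → ZMod K, (∏ i : Fin n, stepProb p (s' i.castSucc) (s' i.succ))
            * (stepProb p a (s' 0) * g a (s' (Fin.last n)))
          = ∑ z, ∑ y, ((transMat K p)^n) z y * (stepProb p a z * g a y) :=
        fun a => ih (fun z y => stepProb p a z * g a y)
      rw [Finset.sum_congr rfl fun a _ => step2 a, pow_succ']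
      refine Finset.sum_congr rfl fun a _ => ?_
      rw [Finset.sum_comm]
      refine Finset.sum_congr rfl fun y _ => ?_
      rw [Matrix.mul_apply, Finset.sum_mul]
      refine Finset.sum_congr rfl fun z _ => ?_
      rw [stepMat_eq]
      ring


lemma shift (n : ℕ) (h : (Fin (n+1) → ZMod K) → ℝ) :
    ∑ s : Fin (n+2) → ZMod K, walkPMF K (n+2) p s * h (fun i : Fin (n+1) => s i.succ)
    = ∑ s' : Fin (n+1) → ZMod K, walkPMF K (n+1) p s' * h s' := by
  rw [← Equiv.sum_comp (Fin.consEquiv (fun _ : Fin (n+2) => ZMod K)), Fintype.sum_prod_type]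
  have hterm : ∀ (a : ZMod K) (s' : Fin (n+1) → ZMod K),
      walkPMF K (n+2) p (Fin.cons a s')
        * h (fun i : Fin (n+1) => (Fin.cons a s' : Fin (n+2) → ZMod K) i.succ)
      = stepProb p a (s' 0) * (walkPMF K (n+1) p s' * h s') := by
    intro a s'
    have htail : (fun i : Fin (n+1) => (Fin.cons a s' : Fin (n+2) → ZMod K) i.succ) = s' := by
      funext i; exact Fin.cons_succ _ _ _
    rw [htail, prodSplit, prodSplit, Fin.prod_univ_succ]
    have h0 : ((0 : Fin (n+1)).castSucc) = (0 : Fin (n+2)) := rfl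
    have hs0 : (Fin.cons a s' : Fin (n+2) → ZMod K) ((0 : Fin (n+1)).succ) = s' 0 :=
      Fin.cons_succ _ _ _
    have hprod : ∀ i : Fin n,
        stepProb p ((Fin.cons a s' : Fin (n+2) → ZMod K) (i.succ.castSucc))
          ((Fin.cons a s' : Fin (n+2) → ZMod K) (i.succ.succ))
        = stepProb p (s' i.castSucc) (s' i.succ) := by
      intro i
      rw [← Fin.succ_castSucc, Fin.cons_succ, Fin.cons_succ]
    rw [Finset.prod_congr rfl (fun i _ => hprod i), h0, Fin.cons_zero, hs0]
    ring
  refine Eq.trans (Finset.sum_congr rfl fun a _ => Finset.sum_congr rfl fun s' _ => hterm a s') ?_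
  rw [Finset.sum_comm]
  refine Finset.sum_congr rfl fun s' _ => ?_
  rw [← Finset.sum_mul, colsum, one_mul]

lemma joint (m n : ℕ) (hmn : m ≤ n) (g : ZMod K → ZMod K → ℝ) :
    ∑ s : Fin (n+1) → ZMod K,
        walkPMF K (n+1) p s * g (s ⟨m, Nat.lt_succ_of_le hmn⟩) (s (Fin.last n))
    = (1 / K) * ∑ x, ∑ y, ((transMat K p) ^ (n - m)) x y * g x y := by
  induction m generalizing n with
  | zero =>
      have h0 : (⟨0, Nat.lt_succ_of_le hmn⟩ : Fin (n+1)) = 0 := rfl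
      rw [h0, Nat.sub_zero]
      rw [Finset.sum_congr rfl fun s _ => by rw [prodSplit (p := p) n s]]
      rw [Finset.sum_congr rfl fun s (_ : s ∈ Finset.univ) => mul_assoc _ _ _]
      rw [← Finset.mul_sum, chain]
  | succ m ih =>
      obtain ⟨k, rfl⟩ : ∃ k, n = k + 1 := ⟨n - 1, by omega⟩
      have hmk : m ≤ k := by omega
      have key := shift (p := p) k
        (fun s' : Fin (k+1) → ZMod K =>
          g (s' ⟨m, Nat.lt_succ_of_le hmk⟩) (s' (Fin.last k)))
      have hsub : (k + 1) - (m + 1) = k - m := by omega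
      rw [hsub, ← ih k hmk, ← key]
      rfl



section Analytic

variable (N M : ℕ) [NeZero N] (η ε : ℝ)

/-- The count of occurrences of `j` among the first `N-1` tokens. -/
def cnt (s : Fin N → ZMod K) (j : ZMod K) : ℝ :=
  ∑ m : Fin N, (if (m : ℕ) < N - 1 ∧ s m = j then (1:ℝ) else 0)

lemma attnW_zero (s : Fin N → ZMod K) (i : Fin N) :
    attnW K N M 0 s i = (N : ℝ)⁻¹ := by
  unfold attnW softmax attnScore
  simp [Matrix.zero_mulVec]

lemma tf_basis (i j : ZMod K) (s : Fin N → ZMod K) (y : ZMod K) :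
    tfOut K N M (Matrix.single i j 1) 0 s y
      = (if i = y then 1 else 0) * (cnt N s j * (N:ℝ)⁻¹) := by
  have hattn : attnW K N M 0 s = fun _ => (N:ℝ)⁻¹ := funext (attnW_zero N M s)
  unfold tfOut
  rw [hattn]
  have hu : ∀ k, ((tokenMat K N s).mulVec (fun _ => (N:ℝ)⁻¹)) k = cnt N s k * (N:ℝ)⁻¹ := by
    intro k
    show (∑ m : Fin N, tokenMat K N s k m * (N:ℝ)⁻¹) = _
    unfold cnt
    rw [Finset.sum_mul]
    exact Finset.sum_congr rfl fun m _ => by simp [tokenMat]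
  have hB : ∀ k, Matrix.single i j (1:ℝ) y k
      = (if i = y then (1:ℝ) else 0) * (if j = k then 1 else 0) := by
    intro k
    by_cases h1 : i = y <;> by_cases h2 : j = k <;> simp [Matrix.single, h1, h2]
  show ∑ k, Matrix.single i j (1:ℝ) y k
      * ((tokenMat K N s).mulVec (fun _ => (N:ℝ)⁻¹)) k = _
  rw [Finset.sum_congr rfl fun k _ => by rw [hB k, hu k, mul_assoc]]
  rw [← Finset.mul_sum]
  congr 1
  have hx : ∀ k : ZMod K, (if j = k then (1:ℝ) else 0) * (cnt N s k * (N:ℝ)⁻¹)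
      = (if j = k then cnt N s k * (N:ℝ)⁻¹ else 0) := by
    intro k; by_cases h : j = k <;> simp [h]
  rw [Finset.sum_congr rfl fun k _ => hx k]
  simp [Finset.sum_ite_eq]

lemma deriv_term (hε : 0 < ε) (c : ℝ) :
    HasDerivAt (fun t : ℝ => logLoss ε (t * c)) (-(c / ε)) 0 := by
  have h1 : HasDerivAt (fun t : ℝ => t * c + ε) c 0 := by
    simpa using ((hasDerivAt_id (0:ℝ)).mul_const c).add_const ε
  have h2 : HasDerivAt Real.log ((0:ℝ) * c + ε)⁻¹ ((0:ℝ) * c + ε) :=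
    Real.hasDerivAt_log (by simp [ne_of_gt hε])
  have h3 := (h2.comp 0 h1).neg
  have heq : (-Real.log ∘ fun t : ℝ => t * c + ε)
      = fun t : ℝ => logLoss ε (t * c) := by
    funext t; simp [logLoss, Function.comp]
  rw [heq] at h3
  refine h3.congr_deriv ?_
  rw [zero_mul, zero_add, div_eq_mul_inv]
  ring

lemma gradV_entry (hε : 0 < ε) (i j : ZMod K) :
    mgrad (fun V => popLoss K N M p (logLoss ε) V 0) 0 i j
    = ∑ s : Fin N → ZMod K, walkPMF K N p s *
        (-(((if i = s (lastIdx N) then (1:ℝ) else 0) * (cnt N s j * (N:ℝ)⁻¹)) / ε)) := by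
  set c : (Fin N → ZMod K) → ℝ :=
    fun s => (if i = s (lastIdx N) then (1:ℝ) else 0) * (cnt N s j * (N:ℝ)⁻¹) with hc
  have hfun : (fun t : ℝ => popLoss K N M p (logLoss ε)
        ((0 : Matrix (ZMod K) (ZMod K) ℝ) + t • Matrix.single i j 1) 0)
      = fun t => ∑ s : Fin N → ZMod K, walkPMF K N p s * logLoss ε (t * c s) := by
    funext t
    unfold popLoss expect
    refine Finset.sum_congr rfl fun s _ => ?_
    have htf : tfOut K N M ((0 : Matrix (ZMod K) (ZMod K) ℝ) + t • Matrix.single i j 1)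
        0 s (s (lastIdx N)) = t * c s := by
      rw [zero_add]
      unfold tfOut
      rw [Matrix.smul_mulVec, Pi.smul_apply, smul_eq_mul]
      congr 1
      exact tf_basis N M i j s (s (lastIdx N))
    simp only [htf]
  have hder : HasDerivAt
      (fun t => ∑ s : Fin N → ZMod K, walkPMF K N p s * logLoss ε (t * c s))
      (∑ s : Fin N → ZMod K, walkPMF K N p s * (-(c s / ε))) 0 :=
    HasDerivAt.fun_sum fun s _ => (deriv_term ε hε (c s)).const_mul _
  show deriv (fun t : ℝ => popLoss K N M p (logLoss ε)
        ((0 : Matrix (ZMod K) (ZMod K) ℝ) + t • Matrix.single i j 1) 0) 0 = _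
  rw [hfun]
  exact hder.deriv

lemma gradW_zero :
    mgrad (fun W => popLoss K N M p (logLoss ε) 0 W)
      (0 : Matrix (ZMod K ⊕ Fin M) (ZMod K ⊕ Fin M) ℝ) = 0 := by
  ext a b
  show deriv (fun t : ℝ => popLoss K N M p (logLoss ε) 0 _) 0 = 0
  have hconst : (fun t : ℝ => popLoss K N M p (logLoss ε) 0
      ((0 : Matrix (ZMod K ⊕ Fin M) (ZMod K ⊕ Fin M) ℝ) + t • Matrix.single a b 1))
      = fun _ => logLoss ε 0 * ∑ s : Fin N → ZMod K, walkPMF K N p s := by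
    funext t
    unfold popLoss expect
    have htf : ∀ s : Fin N → ZMod K,
        tfOut K N M 0 ((0 : Matrix (ZMod K ⊕ Fin M) (ZMod K ⊕ Fin M) ℝ)
          + t • Matrix.single a b 1) s (s (lastIdx N)) = 0 := by
      intro s
      unfold tfOut
      rw [Matrix.zero_mulVec]
      rfl
    simp only [htf]
    rw [← Finset.sum_mul, mul_comm]
  rw [hconst, deriv_const]

lemma collapse (A : Matrix (ZMod K) (ZMod K) ℝ) (i j : ZMod K) :
    ∑ x, ∑ y, A x y * ((if x = j then (1:ℝ) else 0) * (if i = y then 1 else 0)) = A j i := by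
  have h1 : ∀ x y, A x y * ((if x = j then (1:ℝ) else 0) * (if i = y then 1 else 0))
      = (if x = j then (if i = y then A x y else 0) else 0) := by
    intro x y
    by_cases h : x = j <;> by_cases h' : i = y <;> simp [h, h']
  simp only [h1]
  have h2 : ∀ x, (∑ y, if x = j then (if i = y then A x y else 0) else 0)
      = if x = j then A x i else 0 := by
    intro x
    by_cases h : x = j <;> simp [h, Finset.sum_ite_eq]
  simp only [h2, Finset.sum_ite_eq', Finset.mem_univ, if_true]

end Analytic

end RWTProof

/-- Lemma C.1. Under the conditions of Theorem 3.1 (`0 < p < 1`, `K > 4`,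
`N ≥ C_p·K^a`, `M ≥ N^{3/2}`, zero initialization), after one gradient descent step:
`V^(1) = (η/(εNK))·Σ_{i=1}^{N-1}(Πᵀ)^{N-i}` and `W^(1) = 0`. -/
theorem statement3 :
    ∀ p : ℝ, 0 < p → p < 1 →
    ∃ C a : ℝ, 0 < C ∧ 0 < a ∧
      ∀ (K : ℕ) [NeZero K], 4 < K →
      ∀ (N : ℕ) [NeZero N], 2 ≤ N →
      ∀ (M : ℕ) (η ε : ℝ), 0 < η → 0 < ε →
        C * (K : ℝ) ^ a ≤ (N : ℝ) →
        (N : ℝ) ^ ((3 : ℝ) / 2) ≤ (M : ℝ) →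
        (RWT.gd K N M p η (RWT.logLoss ε) 1).1
            = (η / (ε * N * K)) •
                ∑ i ∈ Finset.Icc 1 (N - 1), ((RWT.transMat K p)ᵀ) ^ (N - i)
        ∧ (RWT.gd K N M p η (RWT.logLoss ε) 1).2 = 0 := by
  intro p hp0 hp1
  refine ⟨1, 1, one_pos, one_pos, ?_⟩
  intro K _ hK N _ hN M η ε hη hε _ _
  obtain ⟨n, rfl⟩ : ∃ n, N = n + 1 := ⟨N - 1, by omega⟩
  have hKpos : (0:ℝ) < (K:ℝ) := by exact_mod_cast (by omega : 0 < K)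
  have hK0 : (K:ℝ) ≠ 0 := ne_of_gt hKpos
  have hN0 : ((n+1 : ℕ) : ℝ) ≠ 0 := by positivity
  have hε0 : ε ≠ 0 := ne_of_gt hε
  constructor
  · -- V part
    have hgd1 : (RWT.gd K (n+1) M p η (RWT.logLoss ε) 1).1
        = 0 - η • RWT.mgrad (fun V => RWT.popLoss K (n+1) M p (RWT.logLoss ε) V 0) 0 := by
      simp [RWT.gd]
    rw [hgd1]
    ext i j
    rw [Matrix.sub_apply, Matrix.zero_apply, Matrix.smul_apply, smul_eq_mul,
      RWTProof.gradV_entry (p := p) (n+1) M ε hε i j]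
    set w : (Fin (n+1) → ZMod K) → ℝ := RWT.walkPMF K (n+1) p with hw
    set Q : ℝ := ∑ s : Fin (n+1) → ZMod K, w s *
        ((if i = s (RWT.lastIdx (n+1)) then (1:ℝ) else 0) * RWTProof.cnt (n+1) s j) with hQdef
    have hpull : (∑ s : Fin (n+1) → ZMod K, w s *
          (-(((if i = s (RWT.lastIdx (n+1)) then (1:ℝ) else 0)
              * (RWTProof.cnt (n+1) s j * ((n+1 : ℕ) : ℝ)⁻¹)) / ε)))
        = -(ε⁻¹ * (((n+1 : ℕ) : ℝ)⁻¹ * Q)) := by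
      have hper : ∀ s : Fin (n+1) → ZMod K, w s *
            (-(((if i = s (RWT.lastIdx (n+1)) then (1:ℝ) else 0)
                * (RWTProof.cnt (n+1) s j * ((n+1 : ℕ) : ℝ)⁻¹)) / ε))
          = -(ε⁻¹ * (((n+1 : ℕ) : ℝ)⁻¹ * (w s *
              ((if i = s (RWT.lastIdx (n+1)) then (1:ℝ) else 0) * RWTProof.cnt (n+1) s j)))) := by
        intro s; rw [div_eq_mul_inv]; ring
      rw [Finset.sum_congr rfl fun s _ => hper s, hQdef]
      rw [Finset.sum_neg_distrib, ← Finset.mul_sum, ← Finset.mul_sum]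
    rw [hpull]
    -- compute Q
    have hlast : RWT.lastIdx (n+1) = Fin.last n := rfl
    have hs : ∀ s : Fin (n+1) → ZMod K,
        w s * ((if i = s (RWT.lastIdx (n+1)) then (1:ℝ) else 0) * RWTProof.cnt (n+1) s j)
        = ∑ m : Fin (n+1), w s *
            ((if (m:ℕ) < (n+1) - 1 ∧ s m = j then (1:ℝ) else 0)
              * (if i = s (RWT.lastIdx (n+1)) then 1 else 0)) := by
      intro s
      unfold RWTProof.cnt
      rw [Finset.mul_sum, Finset.mul_sum]
      exact Finset.sum_congr rfl fun m _ => by ring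
    have hFnat : ∀ m : Fin (n+1),
        (∑ s : Fin (n+1) → ZMod K, w s *
            ((if (m:ℕ) < (n+1) - 1 ∧ s m = j then (1:ℝ) else 0)
              * (if i = s (RWT.lastIdx (n+1)) then 1 else 0)))
        = if (m:ℕ) < n then (1/(K:ℝ)) * ((RWT.transMat K p)^(n-(m:ℕ))) j i else 0 := by
      intro m
      by_cases hm : (m:ℕ) < n
      · rw [if_pos hm]
        have hper : ∀ s : Fin (n+1) → ZMod K, w s *
              ((if (m:ℕ) < (n+1) - 1 ∧ s m = j then (1:ℝ) else 0)
                * (if i = s (RWT.lastIdx (n+1)) then 1 else 0))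
            = RWT.walkPMF K (n+1) p s *
              ((fun x y => (if x = j then (1:ℝ) else 0) * (if i = y then 1 else 0))
                (s ⟨(m:ℕ), Nat.lt_succ_of_le hm.le⟩) (s (Fin.last n))) := by
          intro s
          rw [hw, hlast]
          have hmk : (⟨(m:ℕ), Nat.lt_succ_of_le hm.le⟩ : Fin (n+1)) = m := Fin.eta m _
          rw [hmk]
          have hm' : (m:ℕ) < n + 1 - 1 := by omega
          by_cases hsj : s m = j <;> simp [hsj, hm', hm]
        rw [Finset.sum_congr rfl fun s _ => hper s,
          RWTProof.joint (p := p) (m:ℕ) n hm.le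
            (fun x y => (if x = j then (1:ℝ) else 0) * (if i = y then 1 else 0)),
          RWTProof.collapse]
      · rw [if_neg hm]
        have hcond : ∀ s : Fin (n+1) → ZMod K, ¬((m:ℕ) < (n+1) - 1 ∧ s m = j) := by
          intro s h
          exact hm (by omega)
        rw [Finset.sum_congr rfl fun s _ => by rw [if_neg (hcond s)]]
        simp
    have hQ : Q = (1/(K:ℝ)) * ∑ m ∈ Finset.range n, ((RWT.transMat K p)^(n-m)) j i := by
      calc Q = ∑ s : Fin (n+1) → ZMod K, ∑ m : Fin (n+1), w s *
            ((if (m:ℕ) < (n+1) - 1 ∧ s m = j then (1:ℝ) else 0)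
              * (if i = s (RWT.lastIdx (n+1)) then 1 else 0)) :=
          Finset.sum_congr rfl fun s _ => hs s
        _ = ∑ m : Fin (n+1), ∑ s : Fin (n+1) → ZMod K, w s *
            ((if (m:ℕ) < (n+1) - 1 ∧ s m = j then (1:ℝ) else 0)
              * (if i = s (RWT.lastIdx (n+1)) then 1 else 0)) := Finset.sum_comm
        _ = ∑ m : Fin (n+1),
            (if (m:ℕ) < n then (1/(K:ℝ)) * ((RWT.transMat K p)^(n-(m:ℕ))) j i else 0) :=
          Finset.sum_congr rfl fun m _ => hFnat m
        _ = ∑ mm ∈ Finset.range (n+1),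
            (if mm < n then (1/(K:ℝ)) * ((RWT.transMat K p)^(n-mm)) j i else 0) :=
          Fin.sum_univ_eq_sum_range
            (fun mm => if mm < n then (1/(K:ℝ)) * ((RWT.transMat K p)^(n-mm)) j i else 0) (n+1)
        _ = ∑ mm ∈ Finset.range n,
            (if mm < n then (1/(K:ℝ)) * ((RWT.transMat K p)^(n-mm)) j i else 0) := by
          rw [Finset.sum_range_succ, if_neg (lt_irrefl n), add_zero]
        _ = ∑ mm ∈ Finset.range n, (1/(K:ℝ)) * ((RWT.transMat K p)^(n-mm)) j i :=
          Finset.sum_congr rfl fun m hm => if_pos (Finset.mem_range.mp hm)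
        _ = (1/(K:ℝ)) * ∑ m ∈ Finset.range n, ((RWT.transMat K p)^(n-m)) j i :=
          (Finset.mul_sum _ _ _).symm
    rw [hQ]
    -- RHS
    have hIcc : Finset.Icc 1 ((n+1) - 1) = Finset.Icc 1 n := rfl
    rw [Matrix.smul_apply, Matrix.sum_apply, smul_eq_mul]
    have hTr : ∀ i' : ℕ, (((RWT.transMat K p)ᵀ)^((n+1) - i')) i j
        = ((RWT.transMat K p)^((n+1) - i')) j i := by
      intro i'
      rw [← Matrix.transpose_pow, Matrix.transpose_apply]
    rw [Finset.sum_congr hIcc fun i' _ => hTr i']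
    rw [← Finset.Ico_add_one_right_eq_Icc, Finset.sum_Ico_eq_sum_range]
    have hidx : ∀ l ∈ Finset.range (n + 1 - 1),
        ((RWT.transMat K p)^((n+1) - (1 + l))) j i = ((RWT.transMat K p)^(n - l)) j i := by
      intro l hl
      have hl' := Finset.mem_range.mp hl
      have he : n + 1 - (1 + l) = n - l := by omega
      rw [he]
    rw [Finset.sum_congr rfl hidx]
    have hrange : n + 1 - 1 = n := rfl
    rw [hrange]
    have hsc : η / (ε * ((n+1:ℕ):ℝ) * (K:ℝ)) = η * ε⁻¹ * (((n+1:ℕ):ℝ))⁻¹ * ((K:ℝ))⁻¹ := by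
      rw [div_eq_mul_inv, mul_inv, mul_inv]
      ring
    rw [hsc]
    ring
  · -- W part
    have hgd2 : (RWT.gd K (n+1) M p η (RWT.logLoss ε) 1).2
        = 0 - η • RWT.mgrad (fun W => RWT.popLoss K (n+1) M p (RWT.logLoss ε) 0 W) 0 := by
      simp [RWT.gd]
    rw [hgd2, RWTProof.gradW_zero (p := p) (n+1) M ε, smul_zero, sub_zero]
end
end

section
/- Suppose p = 1 (deterministic walk) and N = rK + 1 with r ≥ 1. For any differentiable loss function ℓ, after one gradient descent step on the population loss from zero initialization, V^(1) = −ℓ'(0)·(ηr/(NK))·1_{K×K} (the all-ones matrix scaled) and W^(1) = 0, where ℓ'(0) is the derivative of ℓ evaluated at e_yᵀ f_{θ^(0)}(X) = 0. -/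
open scoped BigOperators
open Matrix

noncomputable section

lemma sum_one_lap (K : ℕ) [NeZero K] (c : ZMod K) :
    ∑ n ∈ Finset.range K, (if ((n : ℕ) : ZMod K) = c then (1:ℝ) else 0) = 1 := by
  have hK : 0 < K := Nat.pos_of_ne_zero (NeZero.ne K)
  have h1 : ∀ n ∈ Finset.range K, (if ((n : ℕ) : ZMod K) = c then (1:ℝ) else 0)
      = if n = c.val then (1:ℝ) else 0 := by
    intro n hn
    rw [Finset.mem_range] at hn
    congr 1
    simp only [eq_iff_iff]
    constructor
    · intro h
      have := congrArg ZMod.val h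
      rwa [ZMod.val_natCast, Nat.mod_eq_of_lt hn] at this
    · rintro rfl; simp [ZMod.natCast_val, ZMod.cast_id]
  rw [Finset.sum_congr rfl h1, Finset.sum_ite_eq' (Finset.range K) c.val]
  simp [ZMod.val_lt c]

lemma sum_laps (K : ℕ) [NeZero K] (c : ZMod K) (r : ℕ) :
    ∑ n ∈ Finset.range (r * K), (if ((n : ℕ) : ZMod K) = c then (1:ℝ) else 0) = r := by
  induction r with
  | zero => simp
  | succ r ih =>
    have h : (r+1) * K = r * K + K := by ring
    rw [h, Finset.sum_range_add, ih]
    have h2 : ∀ n, (((r*K + n : ℕ)) : ZMod K) = ((n:ℕ) : ZMod K) := by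
      intro n; push_cast; simp [ZMod.natCast_self]
    simp_rw [h2]
    rw [sum_one_lap]; push_cast; ring
open RWT
open scoped Classical

/-- The deterministic trajectory starting at `a`. -/
def traj (K N : ℕ) (a : ZMod K) : Fin N → ZMod K := fun i => a + (i : ℕ)

lemma stepProb_one {K : ℕ} (a b : ZMod K) :
    RWT.stepProb 1 a b = if b = a + 1 then (1:ℝ) else 0 := by
  simp [RWT.stepProb]

lemma walkPMF_one (K N : ℕ) [NeZero N] (s : Fin N → ZMod K) :
    RWT.walkPMF K N 1 s
      = (1 / K) * if (∀ (i : ℕ) (h : i + 1 < N), s ⟨i+1, h⟩ = s ⟨i, by omega⟩ + 1)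
          then 1 else 0 := by
  unfold RWT.walkPMF
  congr 1
  by_cases hQ : ∀ (i : ℕ) (h : i + 1 < N), s ⟨i+1, h⟩ = s ⟨i, by omega⟩ + 1
  · rw [if_pos hQ]
    apply Finset.prod_eq_one
    intro i _
    by_cases h : (i : ℕ) + 1 < N
    · rw [dif_pos h, stepProb_one, if_pos]
      exact hQ i h
    · rw [dif_neg h]
  · rw [if_neg hQ]
    push_neg at hQ
    obtain ⟨i, h, hi⟩ := hQ
    apply Finset.prod_eq_zero (Finset.mem_univ (⟨i, by omega⟩ : Fin N))
    rw [dif_pos h, stepProb_one, if_neg]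
    exact hi

lemma traj_of_steps (K N : ℕ) [NeZero N] (s : Fin N → ZMod K)
    (hQ : ∀ (i : ℕ) (h : i + 1 < N), s ⟨i+1, h⟩ = s ⟨i, by omega⟩ + 1) :
    s = traj K N (s ⟨0, Nat.pos_of_ne_zero (NeZero.ne N)⟩) := by
  funext i
  obtain ⟨n, hn⟩ := i
  induction n with
  | zero => simp [traj]
  | succ n ih =>
    have hn' : n < N := by omega
    rw [hQ n hn, ih hn']
    simp only [traj]
    push_cast
    ring

lemma traj_steps (K N : ℕ) (a : ZMod K) :
    ∀ (i : ℕ) (h : i + 1 < N), traj K N a ⟨i+1, h⟩ = traj K N a ⟨i, by omega⟩ + 1 := by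
  intro i h
  simp only [traj]
  push_cast
  ring

lemma traj_injective (K N : ℕ) [NeZero N] : Function.Injective (traj K N : ZMod K → Fin N → ZMod K) := by
  intro a b hab
  have := congrFun hab ⟨0, Nat.pos_of_ne_zero (NeZero.ne N)⟩
  simpa [traj] using this

lemma expect_one (K N : ℕ) [NeZero K] [NeZero N] (g : (Fin N → ZMod K) → ℝ) :
    RWT.expect K N 1 g = ∑ a : ZMod K, (1 / K) * g (traj K N a) := by
  unfold RWT.expect
  simp_rw [walkPMF_one, mul_ite, mul_one, mul_zero, ite_mul, zero_mul]
  rw [Finset.sum_ite, Finset.sum_const_zero, add_zero]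
  rw [show (Finset.univ.filter fun s : Fin N → ZMod K =>
      ∀ (i : ℕ) (h : i + 1 < N), s ⟨i+1, h⟩ = s ⟨i, by omega⟩ + 1)
      = Finset.univ.image (traj K N) from ?_]
  · rw [Finset.sum_image (fun a _ b _ h => traj_injective K N h)]
  · ext s
    simp only [Finset.mem_filter, Finset.mem_image, Finset.mem_univ, true_and]
    constructor
    · intro hQ
      exact ⟨_, (traj_of_steps K N s hQ).symm⟩
    · rintro ⟨a, rfl⟩
      exact traj_steps K N a
lemma attnW_zero (K N M : ℕ) [NeZero K] [NeZero N] (s : Fin N → ZMod K) :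
    RWT.attnW K N M 0 s = fun _ => (1 : ℝ) / N := by
  funext i
  have hs : RWT.attnScore K N M 0 s = fun _ => 0 := by
    funext l
    simp [RWT.attnScore, Matrix.zero_mulVec]
  simp [RWT.attnW, RWT.softmax, hs, Finset.card_univ]

lemma tfOut_smul (K N M : ℕ) [NeZero K] [NeZero N] (t : ℝ)
    (E : Matrix (ZMod K) (ZMod K) ℝ) (W : Matrix (ZMod K ⊕ Fin M) (ZMod K ⊕ Fin M) ℝ)
    (s : Fin N → ZMod K) (y : ZMod K) :
    RWT.tfOut K N M (t • E) W s y = t * RWT.tfOut K N M E W s y := by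
  simp [RWT.tfOut, Matrix.smul_mulVec]

lemma stdBasis_mulVec {K : ℕ} [NeZero K] (i j : ZMod K) (v : ZMod K → ℝ) (y : ZMod K) :
    (Matrix.single i j 1).mulVec v y = if y = i then v j else 0 := by
  simp only [Matrix.mulVec, dotProduct, Matrix.single, Matrix.of_apply,
    ite_mul, one_mul, zero_mul]
  by_cases h : y = i
  · subst h
    simp only [true_and]
    rw [Finset.sum_ite_eq (Finset.univ : Finset (ZMod K)) j v]
    simp
  · have : ∀ k, (if i = y ∧ j = k then v k else 0) = 0 := by
      intro k; rw [if_neg]; rintro ⟨rfl, -⟩; exact h rfl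
    simp [this, h]

lemma token_count (K r N : ℕ) [NeZero K] [NeZero N] (hN : N = r * K + 1)
    (a j : ZMod K) :
    ∑ l : Fin N, RWT.tokenMat K N (traj K N a) j l = r := by
  have h1 : ∀ l : Fin N, RWT.tokenMat K N (traj K N a) j l
      = if (l : ℕ) < N - 1 ∧ (((l : ℕ) : ZMod K) = j - a) then (1:ℝ) else 0 := by
    intro l
    simp only [RWT.tokenMat, Matrix.of_apply, traj]
    congr 1
    simp only [eq_iff_iff, and_congr_right_iff]
    intro _
    constructor
    · intro h; rw [← h]; ring
    · intro h; rw [h]; ring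
  simp_rw [h1]
  rw [Fin.sum_univ_eq_sum_range
    (fun n => if n < N - 1 ∧ ((n : ZMod K) = j - a) then (1:ℝ) else 0) N]
  have h2 : N - 1 = r * K := by omega
  rw [← sum_laps K (j - a) r]
  rw [show N = r * K + 1 from hN]
  rw [Finset.sum_range_succ]
  simp only [Nat.add_sub_cancel]
  rw [if_neg (by simp : ¬ (r * K < r * K ∧ (((r*K : ℕ) : ZMod K) = j - a)))]
  rw [add_zero]
  apply Finset.sum_congr rfl
  intro n hn
  rw [Finset.mem_range] at hn
  congr 1
  simp only [eq_iff_iff, and_iff_right_iff_imp]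
  intro _; omega
lemma traj_last (K r N : ℕ) [NeZero K] [NeZero N] (hN : N = r * K + 1) (a : ZMod K) :
    traj K N a (RWT.lastIdx N) = a := by
  simp only [traj, RWT.lastIdx]
  have : N - 1 = r * K := by omega
  rw [this]
  push_cast
  simp [ZMod.natCast_self]

lemma tfOut_traj (K r N M : ℕ) [NeZero K] [NeZero N] (hN : N = r * K + 1)
    (i j a : ZMod K) :
    RWT.tfOut K N M (Matrix.single i j 1) 0 (traj K N a)
        (traj K N a (RWT.lastIdx N)) = if a = i then (r : ℝ) / N else 0 := by
  rw [traj_last K r N hN]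
  unfold RWT.tfOut
  rw [attnW_zero, stdBasis_mulVec]
  have hv : (RWT.tokenMat K N (traj K N a)).mulVec (fun _ => (1:ℝ)/N) j = (r : ℝ) / N := by
    simp only [Matrix.mulVec, dotProduct]
    rw [← Finset.sum_mul, token_count K r N hN a j]
    ring
  rw [hv]

lemma mgradV (K r N M : ℕ) [NeZero K] [NeZero N] (hN : N = r * K + 1)
    (ℓ : ℝ → ℝ) (hℓ : Differentiable ℝ ℓ) (i j : ZMod K) :
    RWT.mgrad (fun V => RWT.popLoss K N M 1 ℓ V 0) 0 i j
      = deriv ℓ 0 * ((r : ℝ) / (N * K)) := by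
  have hK0 : (K : ℝ) ≠ 0 := Nat.cast_ne_zero.mpr (NeZero.ne K)
  have hN0 : (N : ℝ) ≠ 0 := Nat.cast_ne_zero.mpr (NeZero.ne N)
  set E := Matrix.single i j (1:ℝ) with hE
  set c : (Fin N → ZMod K) → ℝ :=
    fun s => RWT.tfOut K N M E 0 s (s (RWT.lastIdx N)) with hc
  have hfun : (fun t : ℝ => RWT.popLoss K N M 1 ℓ (0 + t • E) 0)
      = fun t => ∑ s : Fin N → ZMod K, RWT.walkPMF K N 1 s * ℓ (t * c s) := by
    funext t
    simp only [zero_add, RWT.popLoss, RWT.expect, tfOut_smul, hc]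
  have hd : HasDerivAt
      (fun t : ℝ => ∑ s : Fin N → ZMod K, RWT.walkPMF K N 1 s * ℓ (t * c s))
      (∑ s : Fin N → ZMod K, RWT.walkPMF K N 1 s * (deriv ℓ 0 * c s)) 0 := by
    apply HasDerivAt.fun_sum
    intro s _
    have h1 : HasDerivAt (fun t : ℝ => t * c s) (c s) 0 := hasDerivAt_mul_const _
    have h2 : HasDerivAt ℓ (deriv ℓ ((0:ℝ) * c s)) ((0:ℝ) * c s) :=
      (hℓ _).hasDerivAt
    have h3 := (h2.comp 0 h1).const_mul (RWT.walkPMF K N 1 s)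
    simpa [zero_mul, Function.comp, mul_comm] using h3
  have hentry : RWT.mgrad (fun V => RWT.popLoss K N M 1 ℓ V 0) 0 i j
      = deriv (fun t : ℝ => RWT.popLoss K N M 1 ℓ (0 + t • E) 0) 0 := rfl
  rw [hentry, hfun, hd.deriv]
  have hexp : (∑ s : Fin N → ZMod K, RWT.walkPMF K N 1 s * (deriv ℓ 0 * c s))
      = RWT.expect K N 1 (fun s => deriv ℓ 0 * c s) := rfl
  rw [hexp, expect_one]
  have hcc : ∀ a : ZMod K, c (traj K N a) = if a = i then (r : ℝ) / N else 0 := by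
    intro a
    exact tfOut_traj K r N M hN i j a
  simp_rw [hcc, mul_ite, mul_zero]
  rw [Finset.sum_ite_eq' Finset.univ i (fun a => 1 / (K:ℝ) * (deriv ℓ 0 * ((r:ℝ)/N)))]
  simp only [Finset.mem_univ, if_true]
  field_simp

lemma mgradW (K N M : ℕ) [NeZero K] [NeZero N] (ℓ : ℝ → ℝ) :
    RWT.mgrad (fun W => RWT.popLoss K N M 1 ℓ 0 W) 0 = 0 := by
  ext i j
  have hfun : (fun t : ℝ => RWT.popLoss K N M 1 ℓ 0 (0 + t • Matrix.single i j 1))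
      = fun _ => RWT.expect K N 1 (fun _ => ℓ 0) := by
    funext t
    simp [RWT.popLoss, RWT.tfOut, Matrix.zero_mulVec]
  have hentry : RWT.mgrad (fun W => RWT.popLoss K N M 1 ℓ 0 W) 0 i j
      = deriv (fun t : ℝ => RWT.popLoss K N M 1 ℓ 0 (0 + t • Matrix.single i j 1)) 0 := rfl
  rw [hentry, hfun, deriv_const]
  rfl

/-- Lemma D.1. For the deterministic walk `p = 1` with `N = rK + 1`,
`r ≥ 1`, and any differentiable loss `ℓ`, one gradient descent step from zero
initialization gives `V^(1) = −ℓ'(0)·(ηr/(NK))·1_{K×K}` and `W^(1) = 0`, where `ℓ'(0)` is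
the derivative of `ℓ` at `e_yᵀ f_{θ^(0)}(X) = 0`. -/
theorem statement12 (K r : ℕ) [NeZero K] (hr : 1 ≤ r) (N : ℕ) (hN : N = r * K + 1)
    [NeZero N] (M : ℕ) (ℓ : ℝ → ℝ) (hℓ : Differentiable ℝ ℓ) (η : ℝ) (hη : 0 < η) :
    (RWT.gd K N M 1 η ℓ 1).1
        = (-(deriv ℓ 0) * (η * r / (N * K))) • RWT.onesMat K
    ∧ (RWT.gd K N M 1 η ℓ 1).2 = 0 := by
  have hgd : RWT.gd K N M 1 η ℓ 1
      = (0 - η • RWT.mgrad (fun V => RWT.popLoss K N M 1 ℓ V 0) 0,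
         0 - η • RWT.mgrad (fun W => RWT.popLoss K N M 1 ℓ 0 W) 0) := rfl
  rw [hgd]
  constructor
  · ext i j
    simp only [Matrix.sub_apply, Matrix.zero_apply, Matrix.smul_apply, smul_eq_mul,
      Matrix.smul_apply, RWT.onesMat, Matrix.of_apply]
    rw [mgradV K r N M hN ℓ hℓ i j]
    ring
  · rw [mgradW K N M ℓ]
    simp
end
end

section
/- Suppose p = 1 (deterministic walk) and N = rK + 1 with r ≥ 1. For any differentiable loss function ℓ, after two gradient descent steps from zero initialization: V^(2) = −(ℓ'(θ^(0)) + ℓ'(θ^(1)))·(ηr/(NK))·1_{K×K}, W₁₂^(2) = ℓ'(θ^(1))·ℓ'(θ^(0))·(η²r²/(N³K))·1_K p_Nᵀ, and W₂₂^(2) = ℓ'(θ^(1))·ℓ'(θ^(0))·( (η²r/(N³K))·Σ_{i=1}^{N−1} p_i − (η²r²/N³)·p_N )·p_Nᵀ, where ℓ'(θ^(t)) denotes the derivative of ℓ evaluated at e_yᵀ f_{θ^(t)}(X), which for t = 0 and t = 1 is the same deterministic value for every sample. -/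
open scoped BigOperators
open Matrix

noncomputable section

namespace RWT

/-- The deterministic (`p = 1`) walk started at node `0`. -/
def detWalk (K N : ℕ) : Fin N → ZMod K := fun i => ((i : ℕ) : ZMod K)

end RWT

namespace RWT13

open RWT

variable (K N M : ℕ) [NeZero K] [NeZero N]

/-- The deterministic walk started at `a`. -/
def walk (a : ZMod K) : Fin N → ZMod K := fun i => a + ((i : ℕ) : ZMod K)

lemma stepProb_one {K : ℕ} (a b : ZMod K) :
    stepProb 1 a b = if b = a + 1 then 1 else 0 := by
  simp [stepProb]

lemma idx0_lt : 0 < N := Nat.pos_of_ne_zero (NeZero.ne N)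

lemma walk_step_iff (s : Fin N → ZMod K) :
    (∀ i : Fin N, ∀ h : (i : ℕ) + 1 < N, s ⟨(i : ℕ) + 1, h⟩ = s i + 1) ↔
      s = walk K N (s ⟨0, idx0_lt N⟩) := by
  constructor
  · intro hstep
    funext i
    obtain ⟨n, hn⟩ := i
    induction n with
    | zero => simp [walk]
    | succ m ih =>
      have hm : m < N := Nat.lt_of_succ_lt hn
      have := hstep ⟨m, hm⟩ hn
      rw [this, ih hm]
      simp [walk]
      push_cast
      ring
  · intro h i hi
    rw [h]
    simp [walk]
    push_cast
    ring

lemma walkPMF_one (s : Fin N → ZMod K) :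
    walkPMF K N 1 s = if s = walk K N (s ⟨0, idx0_lt N⟩) then ((K:ℝ))⁻¹ else (0:ℝ) := by
  rw [walkPMF]
  by_cases h : s = walk K N (s ⟨0, idx0_lt N⟩)
  · rw [if_pos h]
    have : ∀ i : Fin N,
        (if h' : (i : ℕ) + 1 < N then stepProb 1 (s i) (s ⟨(i : ℕ) + 1, h'⟩) else 1) = 1 := by
      intro i
      by_cases h' : (i : ℕ) + 1 < N
      · rw [dif_pos h', stepProb_one, if_pos ((walk_step_iff K N s).2 h i h')]
      · rw [dif_neg h']
    rw [Finset.prod_congr rfl fun i _ => this i]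
    simp
  · rw [if_neg h]
    have : ¬ (∀ i : Fin N, ∀ h' : (i : ℕ) + 1 < N, s ⟨(i : ℕ) + 1, h'⟩ = s i + 1) := by
      intro hc; exact h ((walk_step_iff K N s).1 hc)
    push_neg at this
    obtain ⟨i, hi, hne⟩ := this
    refine mul_eq_zero_of_right _ (Finset.prod_eq_zero (Finset.mem_univ i) ?_)
    rw [dif_pos hi, stepProb_one, if_neg hne]

lemma walk_zero (a : ZMod K) : walk K N a ⟨0, idx0_lt N⟩ = a := by
  simp [walk]

lemma expect_one (g : (Fin N → ZMod K) → ℝ) :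
    expect K N 1 g = ((K:ℝ))⁻¹ * ∑ a : ZMod K, g (walk K N a) := by
  rw [expect]
  have h1 : ∀ s : Fin N → ZMod K, walkPMF K N 1 s * g s
      = ∑ a : ZMod K, if s = walk K N a then ((K:ℝ))⁻¹ * g s else 0 := by
    intro s
    rw [walkPMF_one]
    by_cases h : s = walk K N (s ⟨0, idx0_lt N⟩)
    · rw [if_pos h]
      have hiff : ∀ a : ZMod K, s = walk K N a ↔ a = s ⟨0, idx0_lt N⟩ := by
        intro a
        constructor
        · intro ha; rw [ha, walk_zero]
        · intro ha; rw [ha]; exact h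
      simp only [hiff]
      rw [Finset.sum_ite_eq' Finset.univ (s ⟨0, idx0_lt N⟩) (fun _ => ((K:ℝ))⁻¹ * g s)]
      simp
    · rw [if_neg h, zero_mul]
      symm
      apply Finset.sum_eq_zero
      intro a _
      rw [if_neg]
      intro hc
      apply h
      have h0 : s ⟨0, idx0_lt N⟩ = a := by rw [hc, walk_zero]
      rw [h0]; exact hc
  rw [Finset.mul_sum]
  trans (∑ s : Fin N → ZMod K, ∑ a : ZMod K, if s = walk K N a then ((K:ℝ))⁻¹ * g s else 0)
  · exact Finset.sum_congr rfl fun s _ => h1 s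
  rw [Finset.sum_comm]
  apply Finset.sum_congr rfl
  intro a _
  rw [Finset.sum_ite_eq' Finset.univ (walk K N a) (fun s => ((K:ℝ))⁻¹ * g s)]
  simp

lemma count_range (r : ℕ) (c : ZMod K) :
    ((Finset.range (r * K)).filter fun n => ((n : ℕ) : ZMod K) = c).card = r := by
  have hK : 0 < K := Nat.pos_of_ne_zero (NeZero.ne K)
  have hcval : c.val < K := ZMod.val_lt c
  conv_rhs => rw [← Finset.card_range r]
  apply Finset.card_bij' (fun n _ => n / K) (fun t _ => t * K + c.val)
  · intro n hn
    simp only [Finset.mem_filter, Finset.mem_range] at hn ⊢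
    exact Nat.div_lt_of_lt_mul (by rw [mul_comm]; exact hn.1)
  · intro t ht
    simp only [Finset.mem_range] at ht
    simp only [Finset.mem_filter, Finset.mem_range]
    constructor
    · calc t * K + c.val < t * K + K := by omega
        _ = (t + 1) * K := by ring
        _ ≤ r * K := Nat.mul_le_mul_right K (by omega)
    · push_cast
      simp [ZMod.natCast_self, ZMod.natCast_val, ZMod.cast_id]
  · intro n hn
    simp only [Finset.mem_filter, Finset.mem_range] at hn
    have hmod : n % K = c.val := by
      have := hn.2
      have h1 : ((n : ℕ) : ZMod K).val = c.val := by rw [this]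
      rwa [ZMod.val_natCast] at h1
    calc n / K * K + c.val = K * (n / K) + n % K := by rw [mul_comm, hmod]
      _ = n := Nat.div_add_mod n K
  · intro t ht
    simp only [Finset.mem_range] at ht
    rw [mul_comm, Nat.mul_add_div hK, Nat.div_eq_of_lt hcval, add_zero]

lemma count_fin (r : ℕ) (hN : N = r * K + 1) (c : ZMod K) :
    ((Finset.univ : Finset (Fin N)).filter
        fun i : Fin N => (i : ℕ) < N - 1 ∧ ((i : ℕ) : ZMod K) = c).card = r := by
  rw [← count_range K r c]
  have hNpos := idx0_lt N
  apply Finset.card_nbij' (i := fun i : Fin N => (i : ℕ))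
    (j := fun n => (⟨n % N, Nat.mod_lt _ hNpos⟩ : Fin N))
  · intro i hi
    simp only [Finset.mem_coe, Finset.mem_filter, Finset.mem_univ, true_and] at hi
    simp only [Finset.mem_coe, Finset.mem_filter, Finset.mem_range]
    exact ⟨by omega, hi.2⟩
  · intro n hn
    simp only [Finset.mem_coe, Finset.mem_filter, Finset.mem_range] at hn
    have hlt : n < N := by omega
    simp only [Finset.mem_coe, Finset.mem_filter, Finset.mem_univ, true_and]
    constructor
    · simp only [Nat.mod_eq_of_lt hlt]; omega
    · simp only [Nat.mod_eq_of_lt hlt]; exact hn.2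
  · intro i _
    apply Fin.ext
    simp [Nat.mod_eq_of_lt i.isLt]
  · intro n hn
    simp only [Finset.mem_coe, Finset.mem_filter, Finset.mem_range] at hn
    simp [Nat.mod_eq_of_lt (show n < N by omega)]

lemma sum_tokenMat_walk (r : ℕ) (hN : N = r * K + 1) (a k : ZMod K) :
    (∑ i : Fin N, tokenMat K N (walk K N a) k i) = (r : ℝ) := by
  have : ∀ i : Fin N, tokenMat K N (walk K N a) k i
      = if (i : ℕ) < N - 1 ∧ ((i : ℕ) : ZMod K) = k - a then 1 else 0 := by
    intro i
    simp only [tokenMat, Matrix.of_apply, walk]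
    congr 1
    simp only [eq_iff_iff, and_congr_right_iff]
    intro _
    constructor
    · intro h; rw [← h]; ring
    · intro h; rw [h]; ring
  rw [Finset.sum_congr rfl fun i _ => this i, Finset.sum_boole]
  rw [show ((Finset.univ : Finset (Fin N)).filter
        (fun i : Fin N => (i : ℕ) < N - 1 ∧ ((i : ℕ) : ZMod K) = k - a)).card = r
    from count_fin K N r hN (k - a)]

lemma tokenMat_lastIdx (s : Fin N → ZMod K) (k : ZMod K) :
    tokenMat K N s k (lastIdx N) = 0 := by
  simp only [tokenMat, Matrix.of_apply, lastIdx]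
  rw [if_neg]
  simp

lemma softmax_sum (z : Fin N → ℝ) : (∑ i, softmax z i) = 1 := by
  have hpos : (0:ℝ) < ∑ j, Real.exp (z j) :=
    Finset.sum_pos (fun j _ => Real.exp_pos _) ⟨lastIdx N, Finset.mem_univ _⟩
  simp only [softmax]
  rw [← Finset.sum_div, div_self (ne_of_gt hpos)]

lemma attnScore_zero (s : Fin N → ZMod K) (i : Fin N) :
    attnScore K N M 0 s i = 0 := by
  simp [attnScore, Matrix.zero_mulVec]

lemma attnW_zero (s : Fin N → ZMod K) (i : Fin N) :
    attnW K N M 0 s i = (N : ℝ)⁻¹ := by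
  simp [attnW, softmax, attnScore_zero, Real.exp_zero]

lemma attnScore_smul_std (t : ℝ) (a b : ZMod K ⊕ Fin M) (s : Fin N → ZMod K) (i : Fin N) :
    attnScore K N M (t • Matrix.single a b 1) s i
      = t * (embMat K N M s a i * embMat K N M s b (lastIdx N)) := by
  simp only [attnScore, Matrix.smul_mulVec, Pi.smul_apply, smul_eq_mul]
  have hmv : ∀ c, (Matrix.single a b (1:ℝ)).mulVec
      (fun b' => embMat K N M s b' (lastIdx N)) c
      = if a = c then embMat K N M s b (lastIdx N) else 0 := by
    intro c
    simp only [Matrix.mulVec, dotProduct, Matrix.single, Matrix.of_apply, ite_and]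
    rw [Finset.sum_eq_single b]
    · by_cases h : a = c <;> simp [h]
    · intro b' _ hb'; simp [Ne.symm hb']
    · simp
  simp only [hmv, mul_ite, mul_zero, zero_mul]
  rw [Finset.sum_ite_eq Finset.univ a
    (fun c => embMat K N M s c i * (t * embMat K N M s b (lastIdx N)))]
  simp only [Finset.mem_univ, if_true]
  ring

lemma sum_tokenMat_col (s : Fin N → ZMod K) (i : Fin N) :
    (∑ k : ZMod K, tokenMat K N s k i) = if (i : ℕ) < N - 1 then 1 else 0 := by
  simp only [tokenMat, Matrix.of_apply, ite_and]
  by_cases h : (i : ℕ) < N - 1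
  · simp only [if_pos h]
    rw [Finset.sum_ite_eq Finset.univ (s i) (fun _ => (1:ℝ))]
    simp
  · simp [h]

lemma lt_iff_ne_lastIdx (i : Fin N) : (i : ℕ) < N - 1 ↔ i ≠ lastIdx N := by
  have := i.isLt
  rw [Ne, Fin.ext_iff]
  simp only [lastIdx]
  omega

lemma tfOut_smul_ones (c : ℝ) (W : Matrix (ZMod K ⊕ Fin M) (ZMod K ⊕ Fin M) ℝ)
    (s : Fin N → ZMod K) (y : ZMod K) :
    tfOut K N M (c • onesMat K) W s y = c * (1 - attnW K N M W s (lastIdx N)) := by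
  simp only [tfOut, Matrix.mulVec, dotProduct, Matrix.smul_apply, onesMat, Matrix.of_apply,
    smul_eq_mul, mul_one]
  rw [← Finset.mul_sum]
  congr 1
  rw [Finset.sum_comm]
  have : ∀ i : Fin N, (∑ k : ZMod K, tokenMat K N s k i * attnW K N M W s i)
      = (if i = lastIdx N then 0 else attnW K N M W s i) := by
    intro i
    rw [← Finset.sum_mul, sum_tokenMat_col]
    by_cases h : i = lastIdx N
    · rw [if_pos h, if_neg, zero_mul]
      rw [lt_iff_ne_lastIdx]; simp [h]
    · rw [if_neg h, if_pos ((lt_iff_ne_lastIdx N i).2 h), one_mul]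
  rw [Finset.sum_congr rfl fun i _ => this i]
  have h2 : ∀ i : Fin N, (if i = lastIdx N then (0:ℝ) else attnW K N M W s i)
      = attnW K N M W s i - (if i = lastIdx N then attnW K N M W s i else 0) := by
    intro i; by_cases h : i = lastIdx N <;> simp [h]
  rw [Finset.sum_congr rfl fun i _ => h2 i, Finset.sum_sub_distrib,
    Finset.sum_ite_eq' Finset.univ (lastIdx N) (fun i => attnW K N M W s i)]
  simp [attnW, softmax_sum]

lemma std_mulVec {α β : Type*} [Fintype β] [DecidableEq α] [DecidableEq β]
    (i0 : α) (j0 : β) (v : β → ℝ) (y : α) :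
    (Matrix.single i0 j0 (1:ℝ)).mulVec v y = if i0 = y then v j0 else 0 := by
  simp only [Matrix.mulVec, dotProduct, Matrix.single, Matrix.of_apply, ite_and]
  rw [Finset.sum_eq_single j0]
  · by_cases h : i0 = y <;> simp [h]
  · intro b _ hb; simp [Ne.symm hb]
  · simp

lemma tfOut_zero_V (W : Matrix (ZMod K ⊕ Fin M) (ZMod K ⊕ Fin M) ℝ)
    (s : Fin N → ZMod K) (y : ZMod K) : tfOut K N M 0 W s y = 0 := by
  simp [tfOut, Matrix.zero_mulVec]

lemma mgrad_W_at_zero (ℓ : ℝ → ℝ) :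
    mgrad (fun W => popLoss K N M 1 ℓ 0 W) (0 : Matrix (ZMod K ⊕ Fin M) (ZMod K ⊕ Fin M) ℝ)
      = 0 := by
  ext a b
  simp only [mgrad, Matrix.of_apply, Matrix.zero_apply]
  have : (fun t : ℝ => popLoss K N M 1 ℓ 0
      ((0 : Matrix (ZMod K ⊕ Fin M) (ZMod K ⊕ Fin M) ℝ) + t • Matrix.single a b 1))
      = fun _ => popLoss K N M 1 ℓ 0 0 := by
    funext t
    simp [popLoss, tfOut_zero_V]
  rw [this, deriv_const]

lemma tokenMulVec_attnW_zero (r : ℕ) (hN : N = r * K + 1) (a k : ZMod K) :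
    (tokenMat K N (walk K N a)).mulVec (attnW K N M 0 (walk K N a)) k = r * (N : ℝ)⁻¹ := by
  simp only [Matrix.mulVec, dotProduct]
  rw [Finset.sum_congr rfl fun i _ => by rw [attnW_zero], ← Finset.sum_mul,
    sum_tokenMat_walk K N r hN]

lemma mgrad_V (r : ℕ) (hN : N = r * K + 1) (ℓ : ℝ → ℝ) (hℓ : Differentiable ℝ ℓ) (c : ℝ) :
    mgrad (fun V => popLoss K N M 1 ℓ V 0) (c • onesMat K)
      = (deriv ℓ (c * (1 - (N : ℝ)⁻¹)) * r / (N * K)) • onesMat K := by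
  have hNR : (0:ℝ) < N := by exact_mod_cast idx0_lt N
  have hKR : (0:ℝ) < K := by exact_mod_cast Nat.pos_of_ne_zero (NeZero.ne K)
  ext i0 j0
  simp only [mgrad, Matrix.of_apply, Matrix.smul_apply, smul_eq_mul,
    show onesMat K i0 j0 = 1 from rfl, mul_one]
  set C := c * (1 - (N : ℝ)⁻¹) with hC
  have key : ∀ t : ℝ, popLoss K N M 1 ℓ (c • onesMat K + t • Matrix.single i0 j0 1) 0
      = (K:ℝ)⁻¹ * ∑ a : ZMod K,
          ℓ (C + t * (if i0 = walk K N a (lastIdx N) then (r:ℝ) * (N:ℝ)⁻¹ else 0)) := by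
    intro t
    rw [popLoss, expect_one]
    congr 1
    apply Finset.sum_congr rfl
    intro a _
    congr 1
    have h1 := tfOut_smul_ones K N M c 0 (walk K N a) (walk K N a (lastIdx N))
    rw [attnW_zero] at h1
    simp only [tfOut, Matrix.add_mulVec, Matrix.smul_mulVec, Pi.add_apply,
      Pi.smul_apply, smul_eq_mul, std_mulVec] at h1 ⊢
    rw [h1, tokenMulVec_attnW_zero K N M r hN a j0]
  have hd : ∀ a : ZMod K, HasDerivAt
      (fun t : ℝ => ℓ (C + t * (if i0 = walk K N a (lastIdx N) then (r:ℝ) * (N:ℝ)⁻¹ else 0)))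
      (deriv ℓ C * (if i0 = walk K N a (lastIdx N) then (r:ℝ) * (N:ℝ)⁻¹ else 0)) 0 := by
    intro a
    set d := if i0 = walk K N a (lastIdx N) then (r:ℝ) * (N:ℝ)⁻¹ else 0
    have h1 : HasDerivAt (fun t : ℝ => C + t * d) d 0 := by
      simpa using ((hasDerivAt_id (0:ℝ)).mul_const d).const_add C
    have h2 := (hℓ (C + 0 * d)).hasDerivAt.comp 0 h1
    simpa [Function.comp_def] using h2
  have H : HasDerivAt (fun t : ℝ => (K:ℝ)⁻¹ * ∑ a : ZMod K,
        ℓ (C + t * (if i0 = walk K N a (lastIdx N) then (r:ℝ) * (N:ℝ)⁻¹ else 0)))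
      ((K:ℝ)⁻¹ * ∑ a : ZMod K,
        deriv ℓ C * (if i0 = walk K N a (lastIdx N) then (r:ℝ) * (N:ℝ)⁻¹ else 0)) 0 :=
    (HasDerivAt.fun_sum fun a _ => hd a).const_mul _
  rw [funext key, H.deriv]
  have hcond : ∀ a : ZMod K, (i0 = walk K N a (lastIdx N))
      ↔ (a = i0 - (((N - 1 : ℕ) : ZMod K))) := by
    intro a
    have : walk K N a (lastIdx N) = a + ((N - 1 : ℕ) : ZMod K) := by
      simp [walk, lastIdx]
    rw [this, eq_sub_iff_add_eq]
    exact eq_comm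
  have : ∀ a : ZMod K,
      deriv ℓ C * (if i0 = walk K N a (lastIdx N) then (r:ℝ) * (N:ℝ)⁻¹ else 0)
      = if a = i0 - (((N - 1 : ℕ) : ZMod K)) then deriv ℓ C * ((r:ℝ) * (N:ℝ)⁻¹) else 0 := by
    intro a
    by_cases h : i0 = walk K N a (lastIdx N)
    · rw [if_pos h, if_pos ((hcond a).1 h)]
    · rw [if_neg h, if_neg (fun hc => h ((hcond a).2 hc)), mul_zero]
  rw [Finset.sum_congr rfl fun a _ => this a,
    Finset.sum_ite_eq' Finset.univ _ (fun _ => deriv ℓ C * ((r:ℝ) * (N:ℝ)⁻¹))]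
  simp only [Finset.mem_univ, if_true, div_eq_mul_inv, mul_inv]
  ring

lemma softmax_linear_zero (q : Fin N → ℝ) (i : Fin N) :
    softmax (fun i' => (0:ℝ) * q i') i = (N : ℝ)⁻¹ := by
  simp [softmax, Real.exp_zero]

lemma hasDerivAt_softterm (ℓ : ℝ → ℝ) (hℓ : Differentiable ℝ ℓ) (c : ℝ) (q : Fin N → ℝ) :
    HasDerivAt (fun t : ℝ => ℓ (c * (1 - softmax (fun i => t * q i) (lastIdx N))))
      (deriv ℓ (c * (1 - (N:ℝ)⁻¹))
        * (c * ((∑ i, q i) / (N:ℝ)^2 - q (lastIdx N) / (N:ℝ)))) 0 := by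
  have hNR : (0:ℝ) < N := by exact_mod_cast idx0_lt N
  have hNne : (N:ℝ) ≠ 0 := ne_of_gt hNR
  have hexp : ∀ w : ℝ, HasDerivAt (fun t : ℝ => Real.exp (t * w)) w 0 := by
    intro w
    have h1 : HasDerivAt (fun t : ℝ => t * w) w 0 := by
      simpa using (hasDerivAt_id (0:ℝ)).mul_const w
    simpa [Function.comp_def] using (Real.hasDerivAt_exp ((0:ℝ) * w)).comp 0 h1
  have hden : (∑ j, Real.exp ((0:ℝ) * q j)) = (N:ℝ) := by
    simp [Real.exp_zero]
  have hS : HasDerivAt (fun t : ℝ => softmax (fun i => t * q i) (lastIdx N))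
      (q (lastIdx N) / (N:ℝ) - (∑ j, q j) / (N:ℝ)^2) 0 := by
    have hh : HasDerivAt (fun t : ℝ => ∑ j, Real.exp (t * q j)) (∑ j, q j) 0 :=
      HasDerivAt.fun_sum fun j _ => hexp (q j)
    have hdiv := (hexp (q (lastIdx N))).div hh (by rw [hden]; exact hNne)
    have heq : (fun t : ℝ => softmax (fun i => t * q i) (lastIdx N))
        = fun t : ℝ => Real.exp (t * q (lastIdx N)) / ∑ j, Real.exp (t * q j) := by
      funext t; rfl
    rw [heq]
    refine hdiv.congr_deriv ?_
    rw [hden]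
    simp only [zero_mul, Real.exp_zero, one_mul]
    field_simp
  have hin : HasDerivAt (fun t : ℝ => c * (1 - softmax (fun i => t * q i) (lastIdx N)))
      (c * ((∑ i, q i) / (N:ℝ)^2 - q (lastIdx N) / (N:ℝ))) 0 := by
    have := ((hasDerivAt_const (0:ℝ) (1:ℝ)).sub hS).const_mul c
    refine this.congr_deriv ?_
    ring
  have hcomp := (hℓ (c * (1 - softmax (fun i => (0:ℝ) * q i) (lastIdx N)))).hasDerivAt.comp 0 hin
  rw [softmax_linear_zero] at hcomp
  exact hcomp

lemma deriv_popW (ℓ : ℝ → ℝ) (hℓ : Differentiable ℝ ℓ) (c : ℝ) (a b : ZMod K ⊕ Fin M) :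
    deriv (fun t : ℝ => popLoss K N M 1 ℓ (c • onesMat K)
        ((0 : Matrix (ZMod K ⊕ Fin M) (ZMod K ⊕ Fin M) ℝ) + t • Matrix.single a b 1)) 0
      = (K:ℝ)⁻¹ * ∑ a' : ZMod K,
          deriv ℓ (c * (1 - (N:ℝ)⁻¹))
            * (c * ((∑ i, embMat K N M (walk K N a') a i
                      * embMat K N M (walk K N a') b (lastIdx N)) / (N:ℝ)^2
                - embMat K N M (walk K N a') a (lastIdx N)
                      * embMat K N M (walk K N a') b (lastIdx N) / (N:ℝ))) := by
  have key : ∀ t : ℝ, popLoss K N M 1 ℓ (c • onesMat K)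
        ((0 : Matrix (ZMod K ⊕ Fin M) (ZMod K ⊕ Fin M) ℝ) + t • Matrix.single a b 1)
      = (K:ℝ)⁻¹ * ∑ a' : ZMod K, ℓ (c * (1 - softmax
          (fun i => t * (embMat K N M (walk K N a') a i
            * embMat K N M (walk K N a') b (lastIdx N))) (lastIdx N))) := by
    intro t
    rw [popLoss, expect_one]
    congr 1
    apply Finset.sum_congr rfl
    intro a' _
    rw [zero_add, tfOut_smul_ones]
    congr 2
    rw [attnW, show attnScore K N M (t • Matrix.single a b 1) (walk K N a')
        = fun i => t * (embMat K N M (walk K N a') a i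
            * embMat K N M (walk K N a') b (lastIdx N))
      from funext fun i => attnScore_smul_std K N M t a b (walk K N a') i]
  rw [funext key]
  exact (HasDerivAt.deriv ((HasDerivAt.fun_sum fun a' _ =>
    hasDerivAt_softterm N ℓ hℓ c _).const_mul _))

lemma embMat_inl (s : Fin N → ZMod K) (k : ZMod K) (i : Fin N) :
    embMat K N M s (Sum.inl k) i = tokenMat K N s k i := rfl

lemma embMat_inr (s : Fin N → ZMod K) (j : Fin M) (i : Fin N) :
    embMat K N M s (Sum.inr j) i = posEmb M ((i : ℕ) + 1) j := rfl

lemma lastIdx_coe : ((lastIdx N : Fin N) : ℕ) = N - 1 := rfl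

lemma lastIdx_succ : ((lastIdx N : Fin N) : ℕ) + 1 = N := by
  have := idx0_lt N
  rw [lastIdx_coe]
  omega

lemma sum_posEmb (j : Fin M) :
    (∑ i : Fin N, posEmb M ((i : ℕ) + 1) j)
      = (∑ i ∈ Finset.Icc 1 (N - 1), posEmb M i j) + posEmb M N j := by
  have hpos := idx0_lt N
  rw [Fin.sum_univ_eq_sum_range (fun n => posEmb M (n + 1) j) N]
  have h1 : N = (N - 1) + 1 := by omega
  conv_lhs => rw [h1]
  rw [Finset.sum_range_succ]
  congr 1
  · rw [show Finset.Icc 1 (N - 1) = Finset.Ico 1 ((N - 1) + 1) from (Finset.Ico_add_one_right_eq_Icc _ _).symm,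
      Finset.sum_Ico_eq_sum_range]
    simp only [Nat.add_sub_cancel]
    exact Finset.sum_congr rfl fun i _ => by rw [add_comm]
  · congr 1
    omega

end RWT13

/-- Lemma D.2. For the deterministic walk `p = 1` with `N = rK + 1`,
`r ≥ 1`, and any differentiable loss `ℓ`, two gradient descent steps from zero
initialization give `V^(2) = −(ℓ'(θ^(0)) + ℓ'(θ^(1)))·(ηr/(NK))·1_{K×K}`,
`W₁₂^(2) = ℓ'(θ^(1))ℓ'(θ^(0))·(η²r²/(N³K))·1_K p_Nᵀ`, and
`W₂₂^(2) = ℓ'(θ^(1))ℓ'(θ^(0))·((η²r/(N³K))·Σ_{i=1}^{N−1}p_i − (η²r²/N³)·p_N)·p_Nᵀ`,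
where `ℓ'(θ^(t))` is the derivative of `ℓ` at `e_yᵀ f_{θ^(t)}(X)`, a value which for
`t = 0, 1` is the same for every sample in the support of the data distribution. -/
theorem statement13 (K r : ℕ) [NeZero K] (hr : 1 ≤ r) (N : ℕ) (hN : N = r * K + 1)
    [NeZero N] (M : ℕ) (ℓ : ℝ → ℝ) (hℓ : Differentiable ℝ ℓ) (η : ℝ) (hη : 0 < η) :
    (∀ s : Fin N → ZMod K, RWT.walkPMF K N 1 s ≠ 0 →
        RWT.tfOut K N M (RWT.gd K N M 1 η ℓ 1).1 (RWT.gd K N M 1 η ℓ 1).2 s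
            (s (RWT.lastIdx N))
          = RWT.tfOut K N M (RWT.gd K N M 1 η ℓ 1).1 (RWT.gd K N M 1 η ℓ 1).2
              (RWT.detWalk K N) (RWT.detWalk K N (RWT.lastIdx N)))
    ∧ (RWT.gd K N M 1 η ℓ 2).1
        = (-(deriv ℓ 0
              + deriv ℓ (RWT.tfOut K N M (RWT.gd K N M 1 η ℓ 1).1
                  (RWT.gd K N M 1 η ℓ 1).2 (RWT.detWalk K N)
                  (RWT.detWalk K N (RWT.lastIdx N))))
            * (η * r / (N * K))) • RWT.onesMat K
    ∧ (∀ (k : ZMod K) (j : Fin M),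
        (RWT.gd K N M 1 η ℓ 2).2 (Sum.inl k) (Sum.inr j)
          = deriv ℓ (RWT.tfOut K N M (RWT.gd K N M 1 η ℓ 1).1
                (RWT.gd K N M 1 η ℓ 1).2 (RWT.detWalk K N)
                (RWT.detWalk K N (RWT.lastIdx N)))
            * deriv ℓ 0 * (η ^ 2 * (r : ℝ) ^ 2 / ((N : ℝ) ^ 3 * K))
            * RWT.posEmb M N j)
    ∧ (∀ (j j' : Fin M),
        (RWT.gd K N M 1 η ℓ 2).2 (Sum.inr j) (Sum.inr j')
          = deriv ℓ (RWT.tfOut K N M (RWT.gd K N M 1 η ℓ 1).1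
                (RWT.gd K N M 1 η ℓ 1).2 (RWT.detWalk K N)
                (RWT.detWalk K N (RWT.lastIdx N)))
            * deriv ℓ 0
            * ((η ^ 2 * (r : ℝ) / ((N : ℝ) ^ 3 * K))
                  * (∑ i ∈ Finset.Icc 1 (N - 1), RWT.posEmb M i j)
                - (η ^ 2 * (r : ℝ) ^ 2 / (N : ℝ) ^ 3) * RWT.posEmb M N j)
            * RWT.posEmb M N j') := by
  have hNpos : 0 < N := Nat.pos_of_ne_zero (NeZero.ne N)
  have hNR : ((N:ℝ)) ≠ 0 := Nat.cast_ne_zero.2 (NeZero.ne N)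
  have hKR : ((K:ℝ)) ≠ 0 := Nat.cast_ne_zero.2 (NeZero.ne K)
  have hNrK : (N:ℝ) = (r:ℝ) * (K:ℝ) + 1 := by rw [hN]; push_cast; ring
  have hmV0 := RWT13.mgrad_V K N M r hN ℓ hℓ 0
  rw [zero_smul, zero_mul] at hmV0
  have hgd1 : RWT.gd K N M 1 η ℓ 1
      = ((-(η * (deriv ℓ 0 * (r:ℝ) / ((N:ℝ) * (K:ℝ))))) • RWT.onesMat K,
         (0 : Matrix (ZMod K ⊕ Fin M) (ZMod K ⊕ Fin M) ℝ)) := by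
    show ((0:Matrix (ZMod K) (ZMod K) ℝ)
            - η • RWT.mgrad (fun V => RWT.popLoss K N M 1 ℓ V 0) 0,
          (0:Matrix (ZMod K ⊕ Fin M) (ZMod K ⊕ Fin M) ℝ)
            - η • RWT.mgrad (fun W => RWT.popLoss K N M 1 ℓ 0 W) 0) = _
    rw [hmV0, RWT13.mgrad_W_at_zero K N M ℓ, smul_zero, sub_zero, zero_sub, smul_smul, ← neg_smul]
  have hout : ∀ (s : Fin N → ZMod K) (y : ZMod K),
      RWT.tfOut K N M (RWT.gd K N M 1 η ℓ 1).1 (RWT.gd K N M 1 η ℓ 1).2 s y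
        = (-(η * (deriv ℓ 0 * (r:ℝ) / ((N:ℝ) * (K:ℝ))))) * (1 - (N:ℝ)⁻¹) := by
    intro s y
    rw [hgd1]
    show RWT.tfOut K N M ((-(η * (deriv ℓ 0 * (r:ℝ) / ((N:ℝ) * (K:ℝ))))) • RWT.onesMat K) 0 s y = _
    rw [RWT13.tfOut_smul_ones, RWT13.attnW_zero]
  have hT : RWT.tfOut K N M (RWT.gd K N M 1 η ℓ 1).1 (RWT.gd K N M 1 η ℓ 1).2
      (RWT.detWalk K N) (RWT.detWalk K N (RWT.lastIdx N)) = (-(η * (deriv ℓ 0 * (r:ℝ) / ((N:ℝ) * (K:ℝ))))) * (1 - (N:ℝ)⁻¹) := hout _ _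
  have hgd2 : RWT.gd K N M 1 η ℓ 2
      = ((RWT.gd K N M 1 η ℓ 1).1 - η • RWT.mgrad
            (fun V => RWT.popLoss K N M 1 ℓ V (RWT.gd K N M 1 η ℓ 1).2) (RWT.gd K N M 1 η ℓ 1).1,
         (RWT.gd K N M 1 η ℓ 1).2 - η • RWT.mgrad
            (fun W => RWT.popLoss K N M 1 ℓ (RWT.gd K N M 1 η ℓ 1).1 W) (RWT.gd K N M 1 η ℓ 1).2) := rfl
  rw [hgd1] at hgd2
  dsimp only at hgd2
  refine ⟨fun s _ => by rw [hout, hout], ?_, ?_, ?_⟩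
  · -- V step
    rw [hgd2]
    dsimp only
    rw [RWT13.mgrad_V K N M r hN ℓ hℓ (-(η * (deriv ℓ 0 * (r:ℝ) / ((N:ℝ) * (K:ℝ))))), hT, smul_smul, ← sub_smul]
    congr 1
    field_simp
    ring
  · -- W12
    intro k j
    rw [hgd2]
    dsimp only
    simp only [Matrix.sub_apply, Matrix.smul_apply, Matrix.zero_apply, smul_eq_mul, zero_sub]
    simp only [RWT.mgrad, Matrix.of_apply]
    rw [RWT13.deriv_popW K N M ℓ hℓ (-(η * (deriv ℓ 0 * (r:ℝ) / ((N:ℝ) * (K:ℝ))))) (Sum.inl k) (Sum.inr j)]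
    have hsummand : ∀ a' : ZMod K,
        deriv ℓ ((-(η * (deriv ℓ 0 * (r:ℝ) / ((N:ℝ) * (K:ℝ))))) * (1 - (N:ℝ)⁻¹))
          * ((-(η * (deriv ℓ 0 * (r:ℝ) / ((N:ℝ) * (K:ℝ))))) * ((∑ i, RWT.embMat K N M (RWT13.walk K N a') (Sum.inl k) i
                  * RWT.embMat K N M (RWT13.walk K N a') (Sum.inr j) (RWT.lastIdx N)) / (N:ℝ)^2
              - RWT.embMat K N M (RWT13.walk K N a') (Sum.inl k) (RWT.lastIdx N)
                  * RWT.embMat K N M (RWT13.walk K N a') (Sum.inr j) (RWT.lastIdx N) / (N:ℝ)))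
        = deriv ℓ ((-(η * (deriv ℓ 0 * (r:ℝ) / ((N:ℝ) * (K:ℝ))))) * (1 - (N:ℝ)⁻¹))
            * ((-(η * (deriv ℓ 0 * (r:ℝ) / ((N:ℝ) * (K:ℝ))))) * (((r:ℝ) * RWT.posEmb M N j) / (N:ℝ)^2)) := by
      intro a'
      have hsum : (∑ i, RWT.embMat K N M (RWT13.walk K N a') (Sum.inl k) i
          * RWT.embMat K N M (RWT13.walk K N a') (Sum.inr j) (RWT.lastIdx N))
          = (r:ℝ) * RWT.posEmb M N j := by
        rw [Finset.sum_congr rfl fun i _ => by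
          rw [RWT13.embMat_inl, RWT13.embMat_inr, RWT13.lastIdx_succ]]
        rw [← Finset.sum_mul, RWT13.sum_tokenMat_walk K N r hN]
      rw [hsum, RWT13.embMat_inl, RWT13.tokenMat_lastIdx]
      ring
    rw [Finset.sum_congr rfl fun a' _ => hsummand a', Finset.sum_const, Finset.card_univ,
      ZMod.card, hT]
    simp only [nsmul_eq_mul]
    field_simp
  · -- W22
    intro j j'
    rw [hgd2]
    dsimp only
    simp only [Matrix.sub_apply, Matrix.smul_apply, Matrix.zero_apply, smul_eq_mul, zero_sub]
    simp only [RWT.mgrad, Matrix.of_apply]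
    rw [RWT13.deriv_popW K N M ℓ hℓ (-(η * (deriv ℓ 0 * (r:ℝ) / ((N:ℝ) * (K:ℝ))))) (Sum.inr j) (Sum.inr j')]
    have hsummand : ∀ a' : ZMod K,
        deriv ℓ ((-(η * (deriv ℓ 0 * (r:ℝ) / ((N:ℝ) * (K:ℝ))))) * (1 - (N:ℝ)⁻¹))
          * ((-(η * (deriv ℓ 0 * (r:ℝ) / ((N:ℝ) * (K:ℝ))))) * ((∑ i, RWT.embMat K N M (RWT13.walk K N a') (Sum.inr j) i
                  * RWT.embMat K N M (RWT13.walk K N a') (Sum.inr j') (RWT.lastIdx N)) / (N:ℝ)^2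
              - RWT.embMat K N M (RWT13.walk K N a') (Sum.inr j) (RWT.lastIdx N)
                  * RWT.embMat K N M (RWT13.walk K N a') (Sum.inr j') (RWT.lastIdx N) / (N:ℝ)))
        = deriv ℓ ((-(η * (deriv ℓ 0 * (r:ℝ) / ((N:ℝ) * (K:ℝ))))) * (1 - (N:ℝ)⁻¹))
            * ((-(η * (deriv ℓ 0 * (r:ℝ) / ((N:ℝ) * (K:ℝ))))) * ((((∑ i ∈ Finset.Icc 1 (N - 1), RWT.posEmb M i j) + RWT.posEmb M N j)
                  * RWT.posEmb M N j') / (N:ℝ)^2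
              - RWT.posEmb M N j * RWT.posEmb M N j' / (N:ℝ))) := by
      intro a'
      have hsum : (∑ i, RWT.embMat K N M (RWT13.walk K N a') (Sum.inr j) i
          * RWT.embMat K N M (RWT13.walk K N a') (Sum.inr j') (RWT.lastIdx N))
          = ((∑ i ∈ Finset.Icc 1 (N - 1), RWT.posEmb M i j) + RWT.posEmb M N j)
              * RWT.posEmb M N j' := by
        rw [Finset.sum_congr rfl fun i _ => by
          rw [RWT13.embMat_inr, RWT13.embMat_inr, RWT13.lastIdx_succ]]
        rw [← Finset.sum_mul, RWT13.sum_posEmb]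
      rw [hsum, RWT13.embMat_inr, RWT13.embMat_inr, RWT13.lastIdx_succ]
    rw [Finset.sum_congr rfl fun a' _ => hsummand a', Finset.sum_const, Finset.card_univ,
      ZMod.card, hT]
    simp only [nsmul_eq_mul]
    field_simp
    rw [hNrK]
    ring
end
end

section
/- Let K ≥ 3 be odd and p ∈ [0,1]. For every integer R ≥ 1 and all i, j ∈ {1,…,K}, the entries of the R-th power of the transition matrix satisfy |[Π^R]_{i,j} − 1/K| ≤ exp(−8p(1−p)R/K²). -/
open scoped BigOperators
open Matrix

noncomputable section

set_option linter.unusedSectionVars false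
set_option linter.unusedVariables false
set_option linter.unusedTactic false
namespace S15

open Complex Finset

/-- primitive K-th root of unity -/
noncomputable def zet (K : ℕ) : ℂ := Complex.exp (2 * Real.pi * Complex.I / K)

/-- character `a ↦ ζ^a.val` -/
noncomputable def chi (K : ℕ) (a : ZMod K) : ℂ := zet K ^ a.val

variable {K : ℕ} [NeZero K]

lemma hprim : IsPrimitiveRoot (zet K) K := Complex.isPrimitiveRoot_exp K (NeZero.ne K)

lemma zet_pow_K : zet K ^ K = 1 := hprim.pow_eq_one

lemma zet_pow_mod (n : ℕ) : zet K ^ (n % K) = zet K ^ n := by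
  conv_rhs => rw [← Nat.mod_add_div n K]
  rw [pow_add, pow_mul, zet_pow_K, one_pow, mul_one]

lemma chi_add (a b : ZMod K) : chi K (a + b) = chi K a * chi K b := by
  rw [chi, chi, chi, ZMod.val_add, zet_pow_mod, pow_add]

lemma chi_zero : chi K 0 = 1 := by
  rw [chi, ZMod.val_zero, pow_zero]

lemma sum_val_reindex (f : ℕ → ℂ) :
    ∑ k : ZMod K, f k.val = ∑ i ∈ Finset.range K, f i := by
  refine Finset.sum_bij' (fun (k : ZMod K) _ => k.val) (fun i _ => (i : ZMod K))
    (fun k _ => Finset.mem_range.2 k.val_lt) (fun i _ => Finset.mem_univ _)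
    (fun k _ => by simp [ZMod.natCast_val]) (fun i hi => ZMod.val_cast_of_lt (Finset.mem_range.1 hi))
    (fun k _ => rfl)

lemma sum_chi (hK1 : 1 < K) (d : ZMod K) :
    ∑ k : ZMod K, chi K (k * d) = if d = 0 then (K : ℂ) else 0 := by
  split_ifs with hd
  · subst hd
    simp [chi, ZMod.val_zero]
  · have h1 : ∀ k : ZMod K, chi K (k * d) = (zet K ^ d.val) ^ k.val := by
      intro k
      rw [chi, ZMod.val_mul, zet_pow_mod, pow_mul']
    rw [Finset.sum_congr rfl (fun k _ => h1 k),
      sum_val_reindex (fun n => (zet K ^ d.val) ^ n)]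
    have hd0 : 0 < d.val := Nat.pos_of_ne_zero (fun h => hd (by
      have := ZMod.val_injective K (a₁ := d) (a₂ := 0)
      exact this (by simpa [ZMod.val_zero] using h)))
    have hw1 : zet K ^ d.val ≠ 1 :=
      hprim.pow_ne_one_of_pos_of_lt hd0.ne' d.val_lt
    rw [geom_sum_eq hw1]
    rw [← pow_mul, mul_comm, pow_mul, zet_pow_K, one_pow, sub_self, zero_div]

end S15
namespace S15
open Complex Finset
variable {K : ℕ} [NeZero K]

/-- eigenvalue -/
noncomputable def lam (K : ℕ) (p : ℝ) (k : ZMod K) : ℂ :=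
  (p : ℂ) * chi K k + (1 - p) * chi K (-k)

/-- Fourier formula -/
noncomputable def Fou (K : ℕ) [NeZero K] (p : ℝ) (R : ℕ) (d : ZMod K) : ℂ :=
  (1 / K) * ∑ k : ZMod K, lam K p k ^ R * chi K (k * d)

lemma lam_mul_chi (p : ℝ) (k d : ZMod K) :
    lam K p k * chi K (k * d)
      = (p : ℂ) * chi K (k * (d + 1)) + (1 - p) * chi K (k * (d - 1)) := by
  have h1 : k * (d + 1) = k * d + k := by ring
  have h2 : k * (d - 1) = k * d + (-k) := by ring
  rw [h1, h2, chi_add, chi_add, lam]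
  ring

lemma Fou_succ (p : ℝ) (R : ℕ) (d : ZMod K) :
    Fou K p (R + 1) d = (p : ℂ) * Fou K p R (d + 1) + (1 - p) * Fou K p R (d - 1) := by
  have h : ∀ k : ZMod K, lam K p k ^ (R + 1) * chi K (k * d)
      = (p : ℂ) * (lam K p k ^ R * chi K (k * (d + 1)))
        + (1 - p) * (lam K p k ^ R * chi K (k * (d - 1))) := by
    intro k
    have := lam_mul_chi (K := K) p k d
    calc lam K p k ^ (R + 1) * chi K (k * d)
        = lam K p k ^ R * (lam K p k * chi K (k * d)) := by ring
      _ = _ := by rw [this]; ring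
  rw [Fou, Finset.sum_congr rfl (fun k _ => h k), Finset.sum_add_distrib,
    ← Finset.mul_sum, ← Finset.mul_sum]
  rw [Fou, Fou]
  ring

lemma entry_eq_Fou (hK1 : 1 < K) (h2 : (2 : ZMod K) ≠ 0) (p : ℝ) (R : ℕ) (i j : ZMod K) :
    ((RWT.transMat K p ^ R) i j : ℂ) = Fou K p R (i - j) := by
  induction R generalizing i j with
  | zero =>
    rw [pow_zero, Fou]
    simp only [pow_zero, one_mul]
    rw [sum_chi hK1 (i - j)]
    have hKne : (K : ℂ) ≠ 0 := Nat.cast_ne_zero.2 (NeZero.ne K)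
    by_cases hij : i = j
    · simp [hij, Matrix.one_apply, one_div, inv_mul_cancel₀ hKne]
    · have : ¬ (i - j = 0) := fun h => hij (by linear_combination (norm := ring_nf) h)
      simp [Matrix.one_apply, hij, this]
  | succ R ih =>
    rw [pow_succ, Matrix.mul_apply]
    push_cast
    have hsplit : ∀ m : ZMod K, ((RWT.transMat K p ^ R) i m : ℂ) * (RWT.transMat K p m j : ℂ)
        = (p : ℂ) * (if m = j - 1 then ((RWT.transMat K p ^ R) i m : ℂ) else 0)
          + (1 - p) * (if m = j + 1 then ((RWT.transMat K p ^ R) i m : ℂ) else 0) := by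
      intro m
      have hne : (j - 1 : ZMod K) ≠ j + 1 := by
        intro h; exact h2 (by linear_combination (norm := ring_nf) -h)
      rw [RWT.transMat]
      simp only [Matrix.of_apply]
      push_cast
      by_cases hm1 : m = j - 1 <;> by_cases hm2 : m = j + 1 <;>
        simp [hm1, hm2, hne, hne.symm] <;> ring
    rw [Finset.sum_congr rfl (fun m _ => hsplit m), Finset.sum_add_distrib,
      ← Finset.mul_sum, ← Finset.mul_sum,
      Finset.sum_ite_eq' Finset.univ (j - 1), Finset.sum_ite_eq' Finset.univ (j + 1)]
    simp only [Finset.mem_univ, if_true]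
    rw [ih, ih, Fou_succ]
    have e1 : i - (j - 1) = (i - j) + 1 := by ring
    have e2 : i - (j + 1) = (i - j) - 1 := by ring
    rw [e1, e2]

end S15
namespace S15
open Complex Finset
variable {K : ℕ} [NeZero K]

lemma chi_eq_exp (k : ZMod K) :
    chi K k = Complex.exp ((2 * Real.pi * k.val / K : ℝ) * Complex.I) := by
  rw [chi, zet, ← Complex.exp_nat_mul]
  congr 1
  push_cast
  ring

lemma abs_chi (k : ZMod K) : ‖chi K k‖ = 1 := by
  rw [chi_eq_exp, Complex.norm_exp]
  norm_num

lemma chi_neg_eq (k : ZMod K) :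
    chi K (-k) = Complex.exp (-((2 * Real.pi * k.val / K : ℝ) * Complex.I)) := by
  have hmul : chi K (-k) * chi K k = 1 := by
    rw [← chi_add, neg_add_cancel, chi_zero]
  rw [eq_inv_of_mul_eq_one_left hmul, chi_eq_exp, ← Complex.exp_neg]

lemma sin_lb (hK3 : 3 ≤ K) {m : ℕ} (hm1 : 1 ≤ m) (hm2 : 2 * m ≤ K) :
    (2 : ℝ) / K ≤ Real.sin (Real.pi * m / K) := by
  have hπ := Real.pi_pos
  have hKpos : (0:ℝ) < K := by
    have : (3:ℝ) ≤ K := by exact_mod_cast hK3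
    linarith
  have hK3' : (3:ℝ) ≤ K := by exact_mod_cast hK3
  have hm1' : (1:ℝ) ≤ m := by exact_mod_cast hm1
  have hm2' : (2:ℝ) * m ≤ K := by exact_mod_cast hm2
  have h1 : (2:ℝ)/K ≤ Real.sin (Real.pi / K) := by
    have h := Real.mul_le_sin (x := Real.pi / K) (by positivity)
      (by rw [div_le_div_iff₀ hKpos two_pos]; nlinarith)
    calc (2:ℝ)/K = 2 / Real.pi * (Real.pi / K) := by field_simp
      _ ≤ _ := h
  refine h1.trans (Real.sin_le_sin_of_le_of_le_pi_div_two ?_ ?_ ?_)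
  · have hpos : (0:ℝ) < Real.pi / K := by positivity
    linarith
  · rw [div_le_div_iff₀ hKpos two_pos]
    nlinarith
  · rw [div_le_div_iff₀ hKpos hKpos]
    nlinarith [mul_nonneg (mul_nonneg hπ.le (sub_nonneg.2 hm1')) hKpos.le]

lemma sin_sq_lb (hK3 : 3 ≤ K) (hodd : Odd K) {v : ℕ} (hv1 : 1 ≤ v) (hvK : v < K) :
    4 / (K:ℝ)^2 ≤ Real.sin (2 * Real.pi * v / K) ^ 2 := by
  set n := (2*v)/K with hn
  set m := (2*v)%K with hm
  have hKpos : 0 < K := Nat.pos_of_ne_zero (NeZero.ne K)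
  have h2v : 2*v = K*n + m := (Nat.div_add_mod (2*v) K).symm
  have hm0 : m ≠ 0 := by
    intro h
    have hdvd : K ∣ v * 2 := by
      rw [mul_comm]; exact Nat.dvd_of_mod_eq_zero h
    have hKv : K ∣ v := (Nat.Coprime.dvd_of_dvd_mul_right (hodd.coprime_two_right) hdvd)
    exact absurd (Nat.le_of_dvd (by omega) hKv) (by omega)
  have hmK : m < K := Nat.mod_lt _ hKpos
  have hπ := Real.pi_pos
  have hKr : (0:ℝ) < K := by exact_mod_cast hKpos
  have hθ : 2*Real.pi*v/K = n*Real.pi + Real.pi*m/K := by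
    have h2v' : (2*(v:ℝ)) = K*n + m := by exact_mod_cast h2v
    field_simp
    linear_combination h2v'
  have hs : Real.sin (2*Real.pi*v/K) = Real.cos (n*Real.pi) * Real.sin (Real.pi*m/K) := by
    rw [hθ, Real.sin_add, Real.sin_nat_mul_pi, zero_mul, zero_add]
  have hc : Real.cos ((n:ℝ)*Real.pi)^2 = 1 := by
    have h := Real.sin_sq_add_cos_sq ((n:ℝ)*Real.pi)
    rw [Real.sin_nat_mul_pi] at h
    nlinarith
  have hlb : 2/(K:ℝ) ≤ Real.sin (Real.pi*m/K) := by
    by_cases hcase : 2*m ≤ K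
    · exact sin_lb hK3 (Nat.one_le_iff_ne_zero.2 hm0) hcase
    · have hm' : 1 ≤ K - m := by omega
      have h2m' : 2*(K-m) ≤ K := by omega
      have h := sin_lb hK3 hm' h2m'
      have hcast : (Real.pi*((K-m : ℕ):ℝ)/K : ℝ) = Real.pi - Real.pi*m/K := by
        have hc2 : ((K - m : ℕ):ℝ) = (K:ℝ) - m := by
          rw [Nat.cast_sub (le_of_lt hmK)]
        rw [hc2]
        field_simp
      rw [hcast, Real.sin_pi_sub] at h
      exact h
  have h4 : (2/(K:ℝ))^2 ≤ Real.sin (Real.pi*m/K)^2 :=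
    pow_le_pow_left₀ (by positivity) hlb 2
  calc 4/(K:ℝ)^2 = (2/(K:ℝ))^2 := by ring
    _ ≤ Real.sin (Real.pi*m/K)^2 := h4
    _ = Real.sin (2*Real.pi*v/K)^2 := by rw [hs, mul_pow, hc, one_mul]

lemma abs_lam_le (hK3 : 3 ≤ K) (hodd : Odd K) {p : ℝ} (hp0 : 0 ≤ p) (hp1 : p ≤ 1)
    {k : ZMod K} (hk : k ≠ 0) :
    ‖lam K p k‖ ≤ Real.exp (-(8 * p * (1 - p) / (K:ℝ)^2)) := by
  set θ : ℝ := 2 * Real.pi * k.val / K with hθdef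
  have hlam : lam K p k = ((Real.cos θ : ℝ) : ℂ) + (((2*p-1) * Real.sin θ : ℝ) : ℂ) * Complex.I := by
    rw [lam, chi_eq_exp, chi_neg_eq]
    have hneg : -((θ:ℂ) * Complex.I) = ((-θ : ℝ) : ℂ) * Complex.I := by push_cast; ring
    rw [hneg, Complex.exp_mul_I, Complex.exp_mul_I,
      ← Complex.ofReal_cos, ← Complex.ofReal_sin, ← Complex.ofReal_cos, ← Complex.ofReal_sin,
      Real.cos_neg, Real.sin_neg, Complex.ofReal_neg, Complex.ofReal_mul, Complex.ofReal_sub,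
      Complex.ofReal_mul, Complex.ofReal_one, Complex.ofReal_ofNat]
    ring
  have habs2 : ‖lam K p k‖^2 = Real.cos θ^2 + ((2*p-1)*Real.sin θ)^2 := by
    rw [hlam, Complex.sq_norm, Complex.normSq_add_mul_I]
  have hv1 : 1 ≤ k.val := Nat.one_le_iff_ne_zero.2 (fun h => hk ((ZMod.val_eq_zero k).1 h))
  have hsin := sin_sq_lb hK3 hodd hv1 k.val_lt
  rw [← hθdef] at hsin
  have hKr : (0:ℝ) < K := by exact_mod_cast Nat.pos_of_ne_zero (NeZero.ne K)
  have hpq : 0 ≤ p * (1-p) := mul_nonneg hp0 (by linarith)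
  have hpyth := Real.sin_sq_add_cos_sq θ
  have h1 : ‖lam K p k‖^2 ≤ 1 - 16 * (p*(1-p)) / (K:ℝ)^2 := by
    rw [habs2]
    have hK2 : (0:ℝ) < (K:ℝ)^2 := by positivity
    have hhint : 16*(p*(1-p))/(K:ℝ)^2 ≤ 4*(p*(1-p)) * Real.sin θ^2 := by
      have h := mul_le_mul_of_nonneg_left hsin (by positivity : (0:ℝ) ≤ 4*(p*(1-p)))
      calc 16*(p*(1-p))/(K:ℝ)^2 = 4*(p*(1-p)) * (4/(K:ℝ)^2) := by ring
        _ ≤ _ := h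
    have heq : Real.cos θ^2 + ((2*p-1)*Real.sin θ)^2 = 1 - 4*(p*(1-p))*Real.sin θ^2 := by
      linear_combination hpyth
    rw [heq]
    linarith
  have hE : Real.exp (-(8*p*(1-p)/(K:ℝ)^2))^2 = Real.exp (-(16*(p*(1-p))/(K:ℝ)^2)) := by
    rw [sq, ← Real.exp_add]; congr 1; ring
  have h2 : ‖lam K p k‖^2 ≤ Real.exp (-(8*p*(1-p)/(K:ℝ)^2))^2 := by
    rw [hE]
    refine h1.trans ?_
    have := Real.add_one_le_exp (-(16*(p*(1-p))/(K:ℝ)^2))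
    linarith
  have := Real.sqrt_le_sqrt h2
  rwa [Real.sqrt_sq (norm_nonneg _), Real.sqrt_sq (Real.exp_pos _).le] at this

end S15
/-- Lemma E.2. For odd `K ≥ 3` and `p ∈ [0,1]`, for every `R ≥ 1` and
all `i, j`, `|[Π^R]_{i,j} − 1/K| ≤ exp(−8p(1−p)R/K²)`. -/
theorem statement15 (K : ℕ) [NeZero K] (hK : 3 ≤ K) (hodd : Odd K)
    (p : ℝ) (hp0 : 0 ≤ p) (hp1 : p ≤ 1) :
    ∀ R : ℕ, 1 ≤ R → ∀ i j : ZMod K,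
      |(RWT.transMat K p ^ R) i j - 1 / K|
        ≤ Real.exp (-(8 * p * (1 - p) * R / (K : ℝ) ^ 2)) := by
  intro R hR i j
  classical
  have hK1 : 1 < K := by omega
  have hKr : (0:ℝ) < K := by
    have : (3:ℝ) ≤ K := by exact_mod_cast hK
    linarith
  have h2 : (2 : ZMod K) ≠ 0 := by
    intro h
    have h' : ((2:ℕ) : ZMod K) = 0 := by exact_mod_cast h
    have := (ZMod.natCast_eq_zero_iff 2 K).1 h'
    exact absurd (Nat.le_of_dvd two_pos this) (by omega)
  have hEntry := S15.entry_eq_Fou hK1 h2 p R i j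
  set d := i - j with hd
  set E := Real.exp (-(8 * p * (1 - p) / (K:ℝ)^2)) with hE
  set S := ∑ k ∈ Finset.univ.erase (0 : ZMod K), S15.lam K p k ^ R * S15.chi K (k * d) with hS
  have hlam0 : S15.lam K p 0 = 1 := by
    rw [S15.lam, neg_zero, S15.chi_zero]; ring
  have hdecomp : S15.Fou K p R d = 1/(K:ℂ) * (1 + S) := by
    rw [S15.Fou, ← Finset.add_sum_erase _ _ (Finset.mem_univ (0 : ZMod K)), hlam0, one_pow,
      zero_mul, S15.chi_zero, one_mul]
  have habs_eq : |(RWT.transMat K p ^ R) i j - 1 / (K:ℝ)| = ‖(1/(K:ℂ)) * S‖ := by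
    rw [← Real.norm_eq_abs, ← Complex.norm_real]
    congr 1
    push_cast
    rw [hEntry, hdecomp]
    ring
  rw [habs_eq, norm_mul]
  have hcard : (Finset.univ.erase (0 : ZMod K)).card = K - 1 := by
    rw [Finset.card_erase_of_mem (Finset.mem_univ _), Finset.card_univ, ZMod.card]
  have hterm : ∀ k ∈ Finset.univ.erase (0 : ZMod K),
      ‖S15.lam K p k ^ R * S15.chi K (k*d)‖ ≤ E ^ R := by
    intro k hk
    have hk0 : k ≠ 0 := (Finset.mem_erase.1 hk).1
    rw [norm_mul, norm_pow, S15.abs_chi, mul_one]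
    exact pow_le_pow_left₀ (norm_nonneg _) (S15.abs_lam_le hK hodd hp0 hp1 hk0) R
  have hSb : ‖S‖ ≤ ((K:ℝ) - 1) * E ^ R := by
    calc ‖S‖
        ≤ ∑ k ∈ Finset.univ.erase (0:ZMod K),
            ‖S15.lam K p k ^ R * S15.chi K (k*d)‖ := norm_sum_le _ _
      _ ≤ ∑ _k ∈ Finset.univ.erase (0:ZMod K), E^R := Finset.sum_le_sum hterm
      _ = ((K - 1 : ℕ) : ℝ) * E^R := by rw [Finset.sum_const, hcard, nsmul_eq_mul]
      _ = ((K:ℝ) - 1) * E^R := by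
          congr 1
          push_cast [Nat.cast_sub (by omega : 1 ≤ K)]
          ring
  have habs1K : ‖1/(K:ℂ)‖ = 1/(K:ℝ) := by
    rw [norm_div, norm_one, Complex.norm_natCast]
  rw [habs1K]
  have hEposR : 0 < E ^ R := pow_pos (Real.exp_pos _) R
  have hfin : 1/(K:ℝ) * ‖S‖ ≤ E ^ R := by
    have h1K : (0:ℝ) < 1/(K:ℝ) := by positivity
    calc 1/(K:ℝ) * ‖S‖ ≤ 1/(K:ℝ) * (((K:ℝ)-1) * E^R) :=
          mul_le_mul_of_nonneg_left hSb h1K.le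
      _ = E^R - 1/(K:ℝ) * E^R := by field_simp
      _ ≤ E ^ R := by nlinarith [mul_pos h1K hEposR]
  refine hfin.trans_eq ?_
  rw [hE, ← Real.exp_nat_mul]
  congr 1
  push_cast
  ring
end
end

section
/- Let K ≥ 2 be even and p ∈ [0,1]. For every integer R ≥ 1 and all i, j ∈ {1,…,K}: if R is even, then [Π^R]_{i,j} = 0 whenever j − i is odd, and |[Π^R]_{i,j} − 2/K| ≤ exp(−8p(1−p)R/K²) whenever j − i is even; if R is odd, then |[Π^R]_{i,j} − 2/K| ≤ exp(−8p(1−p)R/K²) whenever j − i is odd, and [Π^R]_{i,j} = 0 whenever j − i is even. -/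
open scoped BigOperators
open Matrix

noncomputable section

namespace S16
open Complex


noncomputable def c (K : ℕ) (m : ℤ) : ℂ := Complex.exp (2 * Real.pi * Complex.I * m / K)

noncomputable def lam (K : ℕ) (p : ℝ) (k : ℕ) : ℂ :=
  (p : ℂ) * c K k + (1 - p) * c K (-k)

noncomputable def F (K : ℕ) (p : ℝ) (R : ℕ) (d : ℤ) : ℂ :=
  (1 / K) * ∑ k ∈ Finset.range K, lam K p k ^ R * c K (-(k * d))


lemma c_add (K : ℕ) (m n : ℤ) : c K (m + n) = c K m * c K n := by
  rw [c, c, c, ← Complex.exp_add]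
  congr 1
  push_cast
  ring

lemma c_zero (K : ℕ) : c K 0 = 1 := by simp [c]

lemma c_nat_mul (K : ℕ) (n : ℕ) (m : ℤ) : c K (n * m) = (c K m) ^ n := by
  induction n with
  | zero => simp [c_zero]
  | succ n ih => push_cast; rw [add_mul, one_mul, c_add, ih, pow_succ]

lemma c_eq_one_of_dvd (K : ℕ) (hK : K ≠ 0) (m : ℤ) (h : (K : ℤ) ∣ m) : c K m = 1 := by
  obtain ⟨t, rfl⟩ := h
  rw [c]
  have hKc : (K : ℂ) ≠ 0 := Nat.cast_ne_zero.2 hK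
  have : 2 * (Real.pi : ℂ) * Complex.I * ((K : ℤ) * t : ℤ) / (K : ℕ) = (t : ℤ) * (2 * Real.pi * Complex.I) := by
    push_cast
    field_simp
  rw [this, Complex.exp_int_mul_two_pi_mul_I]

lemma c_eq_one_iff (K : ℕ) (hK : K ≠ 0) (m : ℤ) : c K m = 1 ↔ (K : ℤ) ∣ m := by
  constructor
  · intro h
    rw [c, Complex.exp_eq_one_iff] at h
    obtain ⟨n, hn⟩ := h
    have hKc : (K : ℂ) ≠ 0 := Nat.cast_ne_zero.2 hK
    have h2 : (2 * (Real.pi : ℂ) * Complex.I) ≠ 0 := by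
      simp [Real.pi_ne_zero, Complex.I_ne_zero]
    have : (m : ℂ) = (n : ℂ) * (K : ℂ) := by
      field_simp at hn
      have := hn
      -- 2*π*I*m = n*(2*π*I)*K
      apply mul_left_cancel₀ h2
      linear_combination (2 * (Real.pi:ℂ) * Complex.I) * this
    have : (m : ℤ) = n * K := by exact_mod_cast this
    exact Dvd.intro_left n this.symm
  · exact c_eq_one_of_dvd K hK m

lemma abs_c (K : ℕ) (m : ℤ) : ‖c K m‖ = 1 := by
  rw [c]
  rw [Complex.norm_exp]
  have : (2 * (Real.pi : ℂ) * Complex.I * m / K).re = 0 := by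
    have : 2 * (Real.pi : ℂ) * Complex.I * m / K = ((2 * Real.pi * m / K : ℝ) : ℂ) * Complex.I := by
      push_cast; ring
    rw [this]
    simp
  rw [this, Real.exp_zero]



lemma F_zero (K : ℕ) (hK : K ≠ 0) (p : ℝ) (d : ℤ) :
    F K p 0 d = if ((d : ZMod K) = 0) then 1 else 0 := by
  have hKc : (K : ℂ) ≠ 0 := Nat.cast_ne_zero.2 hK
  rw [F]
  have hterm : ∀ k : ℕ, lam K p k ^ 0 * c K (-(k * d)) = (c K (-d)) ^ k := by
    intro k
    rw [pow_zero, one_mul]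
    rw [show (-(k * d) : ℤ) = (k : ℕ) * (-d) by ring, c_nat_mul]
  rw [Finset.sum_congr rfl fun k _ => hterm k]
  by_cases h : (d : ZMod K) = 0
  · have hdvd : (K : ℤ) ∣ d := (ZMod.intCast_zmod_eq_zero_iff_dvd d K).1 h
    have : c K (-d) = 1 := c_eq_one_of_dvd K hK (-d) (dvd_neg.2 hdvd)
    simp [this, if_pos h, hK]
  · have hdvd : ¬ (K : ℤ) ∣ (-d) := by
      rw [dvd_neg]
      exact fun hc => h ((ZMod.intCast_zmod_eq_zero_iff_dvd d K).2 hc)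
    have hne : c K (-d) ≠ 1 := fun hc => hdvd ((c_eq_one_iff K hK (-d)).1 hc)
    rw [geom_sum_eq hne]
    have : c K (-d) ^ K = 1 := by
      rw [← c_nat_mul]
      exact c_eq_one_of_dvd K hK _ ⟨-d, by ring⟩
    simp [this, if_neg h]

lemma F_rec (K : ℕ) (p : ℝ) (R : ℕ) (d : ℤ) :
    F K p (R + 1) d = (p : ℂ) * F K p R (d - 1) + (1 - (p:ℂ)) * F K p R (d + 1) := by
  rw [F, F, F]
  simp only [Finset.mul_sum]
  rw [← Finset.sum_add_distrib]
  apply Finset.sum_congr rfl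
  intro k _
  have h1 : (-(k * (d - 1)) : ℤ) = k + -(k * d) := by ring
  have h2 : (-(k * (d + 1)) : ℤ) = -k + -(k * d) := by ring
  rw [h1, h2, c_add, c_add, pow_succ, lam]
  ring

lemma step (K : ℕ) [NeZero K] (p : ℝ) (A : Matrix (ZMod K) (ZMod K) ℝ) (i j : ZMod K) :
    (RWT.transMat K p * A) i j = p * A (i + 1) j + (1 - p) * A (i - 1) j := by
  rw [Matrix.mul_apply]
  have key : ∀ m : ZMod K, RWT.transMat K p i m * A m j
      = (if m = i + 1 then p * A m j else 0) + (if m = i - 1 then (1 - p) * A m j else 0) := by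
    intro m
    show (p * (if i = m - 1 then 1 else 0) + (1 - p) * (if i = m + 1 then 1 else 0)) * A m j = _
    have h1 : (i = m - 1) ↔ (m = i + 1) := by
      constructor <;> intro h <;> subst h <;> ring
    have h2 : (i = m + 1) ↔ (m = i - 1) := by
      constructor <;> intro h <;> subst h <;> ring
    simp only [h1, h2]
    split_ifs <;> ring
  rw [Finset.sum_congr rfl fun m _ => key m, Finset.sum_add_distrib,
    Finset.sum_ite_eq' Finset.univ (i+1), Finset.sum_ite_eq' Finset.univ (i-1)]
  simp

lemma formula (K : ℕ) [NeZero K] (p : ℝ) :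
    ∀ (R : ℕ) (i j : ZMod K) (d : ℤ), (d : ZMod K) = j - i →
      (RWT.transMat K p ^ R) i j = (F K p R d).re := by
  intro R
  induction R with
  | zero =>
    intro i j d hd
    rw [pow_zero, Matrix.one_apply, F_zero K (NeZero.ne K) p d]
    by_cases h : i = j
    · have : (d : ZMod K) = 0 := by rw [hd, h, sub_self]
      simp [h, this]
    · have : (d : ZMod K) ≠ 0 := by rw [hd]; exact sub_ne_zero.2 (Ne.symm h)
      simp [h, this]
  | succ R ih =>
    intro i j d hd
    rw [pow_succ', step, ih (i+1) j (d-1) (by push_cast; rw [hd]; ring),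
      ih (i-1) j (d+1) (by push_cast; rw [hd]; ring), F_rec]
    simp only [Complex.add_re, Complex.mul_re, Complex.ofReal_re, Complex.ofReal_im,
      Complex.sub_re, Complex.one_re, Complex.sub_im, Complex.one_im]
    ring

lemma val_add_parity (K : ℕ) [NeZero K] (hK : Even K) (x y : ZMod K) :
    (x + y).val % 2 = (x.val + y.val) % 2 := by
  rw [ZMod.val_add]
  exact Nat.mod_mod_of_dvd _ hK.two_dvd

lemma val_flip (K : ℕ) [NeZero K] (hK2 : 2 ≤ K) (hK : Even K) (x : ZMod K) :
    (x + 1).val % 2 = (x.val + 1) % 2 := by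
  haveI : Fact (1 < K) := ⟨hK2⟩
  rw [val_add_parity K hK x 1, ZMod.val_one]

lemma parity_zero (K : ℕ) [NeZero K] (hK2 : 2 ≤ K) (hKe : Even K) (p : ℝ) :
    ∀ (R : ℕ) (i j : ZMod K), (R + (j - i).val) % 2 = 1 → (RWT.transMat K p ^ R) i j = 0 := by
  intro R
  induction R with
  | zero =>
    intro i j h
    rw [Nat.zero_add] at h
    have hne : j - i ≠ 0 := by intro hc; rw [hc] at h; simp at h
    rw [pow_zero, Matrix.one_apply, if_neg]
    intro hc
    exact hne (by rw [hc, sub_self])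
  | succ R ih =>
    intro i j h
    rw [pow_succ', step]
    have e1 : (j - i).val % 2 = ((j - (i + 1)).val + 1) % 2 := by
      have := val_flip K hK2 hKe (j - (i + 1))
      rw [show j - (i + 1) + 1 = j - i by ring] at this
      omega
    have e2 : (j - (i - 1)).val % 2 = ((j - i).val + 1) % 2 := by
      have := val_flip K hK2 hKe (j - i)
      rw [show j - i + 1 = j - (i - 1) by ring] at this
      omega
    rw [ih (i + 1) j (by omega), ih (i - 1) j (by omega)]
    ring


lemma sin_lb (co θ : ℝ) (hc : 0 < co) (hc2 : co ≤ Real.pi / 2)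
    (h1 : co ≤ θ) (h2 : θ ≤ Real.pi - co) : 2 / Real.pi * co ≤ Real.sin θ := by
  rcases le_or_gt θ (Real.pi / 2) with h | h
  · calc 2 / Real.pi * co ≤ 2 / Real.pi * θ := by
          apply mul_le_mul_of_nonneg_left h1
          positivity
      _ ≤ Real.sin θ := Real.mul_le_sin (le_trans hc.le h1) h
  · have h3 : 0 ≤ Real.pi - θ := by linarith
    have h4 : Real.pi - θ ≤ Real.pi / 2 := by linarith
    calc 2 / Real.pi * co ≤ 2 / Real.pi * (Real.pi - θ) := by
          apply mul_le_mul_of_nonneg_left (by linarith)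
          positivity
      _ ≤ Real.sin (Real.pi - θ) := Real.mul_le_sin h3 h4
      _ = Real.sin θ := Real.sin_pi_sub θ

-- sin(π a / m) ≥ 2/m for 1 ≤ a ≤ m-1
lemma sin_frac_lb (m a : ℕ) (ha1 : 1 ≤ a) (ham : a + 1 ≤ m) :
    2 / (m : ℝ) ≤ Real.sin (Real.pi * a / m) := by
  have hm : (1 : ℝ) ≤ m := by exact_mod_cast le_trans (by omega : 1 ≤ a + 1) ham
  have hm0 : (0 : ℝ) < m := by linarith
  have ha : (1 : ℝ) ≤ a := by exact_mod_cast ha1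
  have ham' : (a : ℝ) + 1 ≤ m := by exact_mod_cast ham
  have key : 2 / Real.pi * (Real.pi / m) ≤ Real.sin (Real.pi * a / m) := by
    apply sin_lb
    · positivity
    · rw [div_le_div_iff₀ hm0 (by norm_num)]
      nlinarith [Real.pi_pos]
    · rw [div_le_div_iff₀ hm0 hm0]
      nlinarith [mul_nonneg (mul_nonneg (sub_nonneg.2 ha) hm0.le) Real.pi_pos.le]
    · have h5 : Real.pi * a / m + Real.pi / m ≤ Real.pi := by
        rw [← add_div, div_le_iff₀ hm0]
        nlinarith [Real.pi_pos]
      linarith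
  have : 2 / Real.pi * (Real.pi / m) = 2 / m := by
    field_simp
  linarith [key, this.symm.le]




lemma lam_eq (m : ℕ) (hm : 1 ≤ m) (p : ℝ) (k : ℕ) :
    lam (2*m) p k = ((Real.cos (Real.pi * k / m) : ℝ) : ℂ)
      + (((2*p - 1) * Real.sin (Real.pi * k / m) : ℝ) : ℂ) * Complex.I := by
  have hm0 : ((m:ℕ) : ℂ) ≠ 0 := Nat.cast_ne_zero.2 (by omega)
  set θ : ℝ := Real.pi * k / m with hθ
  have h1 : c (2*m) (k : ℤ) = Complex.exp ((θ:ℂ) * Complex.I) := by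
    rw [c]; congr 1
    rw [hθ]; push_cast
    field_simp
  have h2 : c (2*m) (-(k : ℤ)) = Complex.exp (((-θ : ℝ):ℂ) * Complex.I) := by
    rw [c]; congr 1
    rw [hθ]; push_cast
    field_simp
  rw [lam, h1, h2, Complex.exp_mul_I, Complex.exp_mul_I]
  push_cast [Complex.ofReal_cos, Complex.ofReal_sin]
  simp only [Complex.cos_neg, Complex.sin_neg]
  ring

lemma abs_lam_le (m : ℕ) (hm : 1 ≤ m) (p : ℝ) (hp0 : 0 ≤ p) (hp1 : p ≤ 1)
    (k : ℕ) (hk1 : 1 ≤ k) (hkK : k < 2*m) (hkm : k ≠ m) :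
    ‖lam (2*m) p k‖ ≤ Real.exp (-(32 * (p * (1-p)) / (((2*m : ℕ)):ℝ)^2)) := by
  have hm0 : (0:ℝ) < (m:ℝ) := by exact_mod_cast Nat.pos_of_ne_zero (by omega)
  set θ : ℝ := Real.pi * k / m with hθ
  have hsin : (2/(m:ℝ))^2 ≤ Real.sin θ ^ 2 := by
    rcases lt_or_gt_of_ne hkm with h | h
    · have hs := sin_frac_lb m k hk1 (by omega)
      rw [← hθ] at hs
      exact pow_le_pow_left₀ (by positivity) hs 2
    · obtain ⟨a, rfl⟩ : ∃ a, k = m + a := ⟨k - m, by omega⟩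
      have hs := sin_frac_lb m a (by omega) (by omega)
      have he : θ = Real.pi * a / m + Real.pi := by
        rw [hθ]; push_cast; field_simp; ring
      rw [he, Real.sin_add_pi]
      have hq : (-Real.sin (Real.pi * a / m))^2 = Real.sin (Real.pi * a / m)^2 := by ring
      rw [hq]
      exact pow_le_pow_left₀ (by positivity) hs 2
  have hsq : ‖lam (2*m) p k‖ ^ 2 = Real.cos θ^2 + ((2*p-1) * Real.sin θ)^2 := by
    rw [lam_eq m hm p k, Complex.sq_norm, Complex.normSq_add_mul_I, ← hθ]
  have hpy := Real.sin_sq_add_cos_sq θ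
  have hKpos : (0:ℝ) < (((2*m:ℕ)):ℝ) := by positivity
  have hpq : 0 ≤ p * (1-p) := mul_nonneg hp0 (by linarith)
  have e1 : Real.cos θ^2 + ((2*p-1)*Real.sin θ)^2 = 1 - 4*(p*(1-p))*Real.sin θ^2 := by
    linear_combination hpy
  have h16 : (2/(m:ℝ))^2 = 16/(((2*m:ℕ)):ℝ)^2 := by
    push_cast
    field_simp
    ring
  have hb : ‖lam (2*m) p k‖^2 ≤ Real.exp (-(64 * (p*(1-p)) / (((2*m:ℕ)):ℝ)^2)) := by
    have e3 := Real.add_one_le_exp (-(64*(p*(1-p))/(((2*m:ℕ)):ℝ)^2))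
    have e2 : 4*(p*(1-p))*Real.sin θ^2 ≥ 64*(p*(1-p))/(((2*m:ℕ)):ℝ)^2 := by
      rw [ge_iff_le, div_le_iff₀ (by positivity)]
      have h17 : 16/(((2*m:ℕ)):ℝ)^2 ≤ Real.sin θ^2 := h16 ▸ hsin
      have h18 : (16:ℝ) ≤ Real.sin θ^2 * (((2*m:ℕ)):ℝ)^2 := (div_le_iff₀ (by positivity)).1 h17
      nlinarith [mul_le_mul_of_nonneg_left h18 hpq]
    rw [hsq, e1]
    linarith
  have h2 : Real.exp (-(64 * (p*(1-p)) / (((2*m:ℕ)):ℝ)^2))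
      = (Real.exp (-(32 * (p*(1-p)) / (((2*m:ℕ)):ℝ)^2)))^2 := by
    rw [show -(64 * (p*(1-p)) / (((2*m:ℕ)):ℝ)^2)
        = (-(32 * (p*(1-p)) / (((2*m:ℕ)):ℝ)^2)) + (-(32 * (p*(1-p)) / (((2*m:ℕ)):ℝ)^2)) by ring,
      Real.exp_add]
    exact (sq _).symm
  rw [h2] at hb
  exact (pow_le_pow_iff_left₀ (norm_nonneg _) (Real.exp_nonneg _) two_ne_zero).1 hb


lemma lam_zero (K : ℕ) (p : ℝ) : lam K p 0 = 1 := by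
  rw [lam]
  norm_num [c_zero]

lemma c_m (m : ℕ) (hm : 1 ≤ m) : c (2*m) (m : ℤ) = -1 := by
  have hm0 : ((m:ℕ) : ℂ) ≠ 0 := Nat.cast_ne_zero.2 (by omega)
  rw [c, show 2 * (Real.pi:ℂ) * Complex.I * ((m:ℤ):ℂ) / ((2*m : ℕ):ℂ) = Real.pi * Complex.I by
    push_cast; field_simp]
  exact Complex.exp_pi_mul_I

lemma c_neg (K : ℕ) (m : ℤ) : c K (-m) = (c K m)⁻¹ := by
  apply eq_inv_of_mul_eq_one_left
  rw [← c_add]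
  simp [c_zero]

lemma c_neg_m (m : ℕ) (hm : 1 ≤ m) : c (2*m) (-(m : ℤ)) = -1 := by
  rw [c_neg, c_m m hm]
  norm_num

lemma lam_m (m : ℕ) (hm : 1 ≤ m) (p : ℝ) : lam (2*m) p m = -1 := by
  rw [lam]
  push_cast
  rw [c_m m hm, c_neg_m m hm]
  ring

lemma c_m_mul (m : ℕ) (hm : 1 ≤ m) (v : ℕ) : c (2*m) (-((m:ℤ) * (v:ℤ))) = (-1)^v := by
  rw [show (-((m:ℤ) * (v:ℤ))) = (v:ℕ) * (-(m:ℤ)) by push_cast; ring, c_nat_mul, c_neg_m m hm]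

lemma F_close (K m : ℕ) (hKm : K = 2*m) (hm : 1 ≤ m) (p : ℝ) (hp0 : 0 ≤ p) (hp1 : p ≤ 1)
    (R v : ℕ) (hpar : (R + v) % 2 = 0) :
    |(F K p R (v:ℤ)).re - 2 / (K:ℝ)| ≤ Real.exp (-(8 * p * (1 - p) * R / (K:ℝ)^2)) := by
  subst hKm
  have hK0 : (((2*m:ℕ)):ℂ) ≠ 0 := Nat.cast_ne_zero.2 (by omega)
  have hKR : (0:ℝ) < ((2*m:ℕ):ℝ) := by positivity
  set f : ℕ → ℂ := fun k => lam (2*m) p k ^ R * c (2*m) (-((k:ℤ) * (v:ℤ))) with hf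
  have h0mem : 0 ∈ Finset.range (2*m) := Finset.mem_range.2 (by omega)
  have hmmem : m ∈ (Finset.range (2*m)).erase 0 :=
    Finset.mem_erase.2 ⟨by omega, Finset.mem_range.2 (by omega)⟩
  set S := ((Finset.range (2*m)).erase 0).erase m with hS
  have hsplit : ∑ k ∈ Finset.range (2*m), f k = f 0 + (f m + ∑ k ∈ S, f k) := by
    rw [hS, Finset.add_sum_erase _ f hmmem, Finset.add_sum_erase _ f h0mem]
  have hf0 : f 0 = 1 := by
    rw [hf]
    simp [lam_zero, c_zero]
  have hfm : f m = 1 := by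
    rw [hf]
    simp only [lam_m m hm p, c_m_mul m hm v]
    rw [← pow_add]
    exact Even.neg_one_pow (Nat.even_iff.2 hpar)
  have hFE : F (2*m) p R (v:ℤ) - 2/(((2*m:ℕ)):ℂ) = (1/(((2*m:ℕ)):ℂ)) * ∑ k ∈ S, f k := by
    rw [F, hsplit, hf0, hfm]
    ring
  have hre : (F (2*m) p R (v:ℤ)).re - 2 / ((2*m:ℕ):ℝ)
      = (F (2*m) p R (v:ℤ) - 2/(((2*m:ℕ)):ℂ)).re := by
    rw [Complex.sub_re]
    congr 1
    rw [show (2 : ℂ)/((2*m:ℕ):ℂ) = ((2/((2*m:ℕ):ℝ) : ℝ) : ℂ) by push_cast; ring]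
    exact (Complex.ofReal_re _).symm
  rw [hre, hFE]
  set B : ℝ := Real.exp (-(32 * (p * (1-p)) / (((2*m : ℕ)):ℝ)^2)) with hB
  have hterm : ∀ k ∈ S, ‖f k‖ ≤ B ^ R := by
    intro k hk
    obtain ⟨hkm, hk0, hkr⟩ : k ≠ m ∧ k ≠ 0 ∧ k ∈ Finset.range (2*m) := by
      rw [hS] at hk
      simp only [Finset.mem_erase] at hk
      exact ⟨hk.1, hk.2.1, hk.2.2⟩
    rw [hf]
    simp only [norm_mul, norm_pow, abs_c, mul_one]
    exact pow_le_pow_left₀ (norm_nonneg _)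
      (abs_lam_le m hm p hp0 hp1 k (by omega) (Finset.mem_range.1 hkr) hkm) R
  have hsum : ‖∑ k ∈ S, f k‖ ≤ (2*m) * B ^ R := by
    calc ‖∑ k ∈ S, f k‖ ≤ ∑ k ∈ S, ‖f k‖ := by
          exact norm_sum_le S f
      _ ≤ ∑ _k ∈ S, B ^ R := Finset.sum_le_sum hterm
      _ = S.card * B ^ R := by rw [Finset.sum_const, nsmul_eq_mul]
      _ ≤ (2*m) * B ^ R := by
          apply mul_le_mul_of_nonneg_right _ (pow_nonneg (Real.exp_nonneg _) R)
          have : S.card ≤ (Finset.range (2*m)).card :=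
            Finset.card_le_card (le_trans (Finset.erase_subset _ _)
              (Finset.erase_subset _ _))
          rw [Finset.card_range] at this
          exact_mod_cast this
  calc |((1/(((2*m:ℕ)):ℂ)) * ∑ k ∈ S, f k).re|
      ≤ ‖(1/(((2*m:ℕ)):ℂ)) * ∑ k ∈ S, f k‖ := Complex.abs_re_le_norm _
    _ = (1/((2*m:ℕ):ℝ)) * ‖∑ k ∈ S, f k‖ := by
        rw [norm_mul]
        congr 1
        rw [show (1 : ℂ)/((2*m:ℕ):ℂ) = ((1/((2*m:ℕ):ℝ) : ℝ) : ℂ) by push_cast; ring]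
        rw [Complex.norm_real, Real.norm_eq_abs, abs_of_pos (by positivity)]
    _ ≤ (1/((2*m:ℕ):ℝ)) * ((2*m) * B ^ R) := by
        apply mul_le_mul_of_nonneg_left hsum (by positivity)
    _ = B ^ R := by
        push_cast
        field_simp
    _ = Real.exp (-(32 * (p * (1-p)) * R / (((2*m : ℕ)):ℝ)^2)) := by
        rw [hB, ← Real.exp_nat_mul]
        congr 1
        ring
    _ ≤ Real.exp (-(8 * p * (1 - p) * R / (((2*m:ℕ)):ℝ)^2)) := by
        apply Real.exp_le_exp.2
        rw [neg_le_neg_iff]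
        have hpq : 0 ≤ p * (1-p) := mul_nonneg hp0 (by linarith)
        apply div_le_div_of_nonneg_right _ (by positivity)
        nlinarith [hpq, Nat.cast_nonneg (α := ℝ) R]


end S16

/-- Lemma E.3. For even `K ≥ 2` and `p ∈ [0,1]`, for every `R ≥ 1` and
all `i, j` (parity of `j − i` is well defined mod `K` since `K` is even): if `R` is even
then `[Π^R]_{i,j} = 0` when `j − i` is odd and `|[Π^R]_{i,j} − 2/K| ≤ exp(−8p(1−p)R/K²)`
when `j − i` is even; if `R` is odd the two cases are interchanged. -/
theorem statement16 (K : ℕ) [NeZero K] (hK : 2 ≤ K) (heven : Even K)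
    (p : ℝ) (hp0 : 0 ≤ p) (hp1 : p ≤ 1) :
    ∀ R : ℕ, 1 ≤ R → ∀ i j : ZMod K,
      (Even R →
          (Odd ((j - i).val) → (RWT.transMat K p ^ R) i j = 0)
          ∧ (Even ((j - i).val) →
              |(RWT.transMat K p ^ R) i j - 2 / K|
                ≤ Real.exp (-(8 * p * (1 - p) * R / (K : ℝ) ^ 2))))
      ∧ (Odd R →
          (Odd ((j - i).val) →
              |(RWT.transMat K p ^ R) i j - 2 / K|
                ≤ Real.exp (-(8 * p * (1 - p) * R / (K : ℝ) ^ 2)))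
          ∧ (Even ((j - i).val) → (RWT.transMat K p ^ R) i j = 0)) := by
  intro R hR i j
  obtain ⟨m, hmm⟩ := id heven
  have hKm : K = 2 * m := by omega
  have hm1 : 1 ≤ m := by omega
  set v : ℕ := (j - i).val with hv
  have hvc : (((v:ℕ):ℤ) : ZMod K) = j - i := by
    push_cast
    exact ZMod.natCast_rightInverse (j - i)
  have hform := S16.formula K p R i j (v:ℤ) hvc
  constructor
  · intro hRe
    constructor
    · intro hvo
      apply S16.parity_zero K hK heven p R i j
      rw [Nat.even_iff] at hRe
      rw [Nat.odd_iff] at hvo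
      omega
    · intro hve
      rw [hform]
      refine S16.F_close K m hKm hm1 p hp0 hp1 R v ?_
      rw [Nat.even_iff] at hRe hve
      omega
  · intro hRo
    constructor
    · intro hvo
      rw [hform]
      refine S16.F_close K m hKm hm1 p hp0 hp1 R v ?_
      rw [Nat.odd_iff] at hRo hvo
      omega
    · intro hve
      apply S16.parity_zero K hK heven p R i j
      rw [Nat.odd_iff] at hRo
      rw [Nat.even_iff] at hve
      omega
end
end
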